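/- arXiv:1109.5152 — 11 statements merged into one kernel-verified Lean document; each statement's English description precedes it below -/
import Mathlib

section
/- For real numbers x ≥ y ≥ 0 and q ≥ 2, one has 2(x^q + 2^(q-2) y^q) ≤ (x+y)^q + (x-y)^q. -/
/-!
The gap `g t = (x + t) ^ q + (x - t) ^ q - 2 ^ (q - 1) * t ^ q` satisfies `g 0 = 2 x ^ q`, and it is
nondecreasing on `[0, x]`: up to the factor `q`, its derivative is
`(x + t) ^ (q - 1) - (x - t) ^ (q - 1) - (2 t) ^ (q - 1)`, which is nonnegative by superadditivity of
`s ↦ s ^ (q - 1)` on `[0, ∞)`, because `(x - t) + 2 t = x + t` and `q - 1 ≥ 1`.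
-/

open Real Set

lemma rpow_sub_add_two_rpow_mul_le_rpow_add {x t p : ℝ} (ht : 0 ≤ t) (htx : t ≤ x) (hp : 1 ≤ p) :
    (x - t) ^ p + 2 ^ p * t ^ p ≤ (x + t) ^ p := by
  rw [← mul_rpow zero_le_two ht]
  convert add_rpow_le_rpow_add (sub_nonneg.2 htx) (by positivity : 0 ≤ 2 * t) hp using 2
  ring

lemma hasDerivAt_rpow_add_add_rpow_sub_sub (x q t : ℝ) (hq : 1 ≤ q) :
    HasDerivAt (fun s => (x + s) ^ q + (x - s) ^ q - 2 ^ (q - 1) * s ^ q)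
      (q * ((x + t) ^ (q - 1) - (x - t) ^ (q - 1) - 2 ^ (q - 1) * t ^ (q - 1))) t := by
  have hpow (u : ℝ) : HasDerivAt (· ^ q) (q * u ^ (q - 1)) u :=
    hasDerivAt_rpow_const (Or.inr hq)
  exact (((hpow _).comp t ((hasDerivAt_id t).const_add x)).add
    ((hpow _).comp t ((hasDerivAt_id t).const_sub x))).sub ((hpow t).const_mul _) |>.congr_deriv
    (by simp only [id]; ring)

lemma monotoneOn_rpow_add_add_rpow_sub_sub (x q : ℝ) (hq : 2 ≤ q) :
    MonotoneOn (fun t => (x + t) ^ q + (x - t) ^ q - 2 ^ (q - 1) * t ^ q) (Icc 0 x) := by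
  have hderiv (t : ℝ) := hasDerivAt_rpow_add_add_rpow_sub_sub x q t (by linarith)
  have hdiff : Differentiable ℝ
      (fun t => (x + t) ^ q + (x - t) ^ q - 2 ^ (q - 1) * t ^ q) :=
    fun t => (hderiv t).differentiableAt
  refine monotoneOn_of_deriv_nonneg (convex_Icc 0 x) hdiff.continuous.continuousOn
    hdiff.differentiableOn fun t ht => ?_
  rw [interior_Icc] at ht
  rw [(hderiv t).deriv]
  have hsuper := rpow_sub_add_two_rpow_mul_le_rpow_add ht.1.le ht.2.le (p := q - 1) (by linarith)
  have hq0 : 0 ≤ q := by linarith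
  exact mul_nonneg hq0 (by linarith)

theorem stmt0 (x y q : ℝ) (hxy : x ≥ y) (hy : y ≥ 0) (hq : q ≥ 2) :
    2 * (x ^ q + 2 ^ (q - 2) * y ^ q) ≤ (x + y) ^ q + (x - y) ^ q := by
  have hmono := monotoneOn_rpow_add_add_rpow_sub_sub x q hq
    (left_mem_Icc.2 (hy.trans hxy)) ⟨hy, hxy⟩ hy
  have h2q : (2 : ℝ) ^ (q - 1) = 2 * 2 ^ (q - 2) := by
    rw [show q - 1 = (q - 2) + 1 by ring, rpow_add_one two_ne_zero]
    ring
  simp only [add_zero, sub_zero, zero_rpow (by linarith : q ≠ 0), mul_zero, h2q] at hmono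
  linarith
end

section
/- Let r ≥ 1 and let x₁,…,xₙ and y₁,…,yₙ be nonnegative real numbers. Define uᵢ = max(xᵢ, yᵢ) and vᵢ = min(xᵢ, yᵢ). Then (∑ uᵢ)^r + (∑ vᵢ)^r ≥ (∑ xᵢ)^r + (∑ yᵢ)^r. -/
/-!
Put `U = ∑ max`, `V = ∑ min`, `X = ∑ x`, `Y = ∑ y`. Then `V ≤ X, Y ≤ U` and `X + Y = U + V`,
so `X` and `Y` are the two convex combinations `a U + (1 - a) V` and `(1 - a) U + a V` of the
same endpoints. Adding the two Jensen inequalities for the convex function `t ↦ t ^ r` on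
`[0, ∞)` gives `X ^ r + Y ^ r ≤ U ^ r + V ^ r`.
-/

open Finset Set

section

variable {𝕜 : Type*} [Field 𝕜] [LinearOrder 𝕜] [IsStrictOrderedRing 𝕜]

theorem ConvexOn.add_le_add_of_add_eq {s : Set 𝕜} {f : 𝕜 → 𝕜} (hf : ConvexOn 𝕜 s f)
    {u v x y : 𝕜} (hu : u ∈ s) (hv : v ∈ s) (hvx : v ≤ x) (hxu : x ≤ u)
    (hsum : x + y = u + v) : f x + f y ≤ f u + f v := by
  rcases hvx.trans hxu |>.eq_or_lt with hvu | hvu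
  · obtain rfl : x = u := le_antisymm hxu (hvu ▸ hvx)
    obtain rfl : y = v := by linarith
    rfl
  set a := (x - v) / (u - v)
  have hpos : 0 < u - v := sub_pos.2 hvu
  have ha₀ : 0 ≤ a := div_nonneg (sub_nonneg.2 hvx) hpos.le
  have ha₁ : a ≤ 1 := (div_le_one hpos).2 (by linarith)
  have hx : a * u + (1 - a) * v = x := by
    have : a * (u - v) = x - v := div_mul_cancel₀ _ hpos.ne'
    linarith
  have hy : (1 - a) * u + a * v = y := by linarith
  have hfx := hf.2 hu hv ha₀ (sub_nonneg.2 ha₁) (add_sub_cancel a 1)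
  have hfy := hf.2 hu hv (sub_nonneg.2 ha₁) ha₀ (sub_add_cancel 1 a)
  simp only [smul_eq_mul, hx, hy] at hfx hfy
  linarith

end

theorem Finset.sum_max_add_sum_min {ι M : Type*} [AddCommMonoid M] [LinearOrder M]
    (s : Finset ι) (f g : ι → M) :
    ∑ i ∈ s, max (f i) (g i) + ∑ i ∈ s, min (f i) (g i) = ∑ i ∈ s, f i + ∑ i ∈ s, g i := by
  rw [← sum_add_distrib, ← sum_add_distrib]
  exact sum_congr rfl fun i _ => max_add_min _ _

theorem stmt2_general (n : ℕ) (r : ℝ) (hr : r ≥ 1) (x y : Fin n → ℝ)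
    (hx : ∀ i, 0 ≤ x i) (hy : ∀ i, 0 ≤ y i) :
    (∑ i, max (x i) (y i)) ^ r + (∑ i, min (x i) (y i)) ^ r ≥
      (∑ i, x i) ^ r + (∑ i, y i) ^ r := by
  have hmin_le : ∑ i, min (x i) (y i) ≤ ∑ i, x i := sum_le_sum fun i _ => min_le_left _ _
  have hle_max : ∑ i, x i ≤ ∑ i, max (x i) (y i) := sum_le_sum fun i _ => le_max_left _ _
  have hmin_nonneg : 0 ≤ ∑ i, min (x i) (y i) := sum_nonneg fun i _ => le_min (hx i) (hy i)
  exact (convexOn_rpow hr).add_le_add_of_add_eq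
    (mem_Ici.2 (hmin_nonneg.trans (hmin_le.trans hle_max))) (mem_Ici.2 hmin_nonneg)
    hmin_le hle_max (sum_max_add_sum_min _ x y).symm

theorem stmt2 (n : ℕ) (hn : 0 < n) (r : ℝ) (hr : r ≥ 1) (x y : Fin n → ℝ)
    (hx : ∀ i, 0 ≤ x i) (hy : ∀ i, 0 ≤ y i) :
    (∑ i, max (x i) (y i)) ^ r + (∑ i, min (x i) (y i)) ^ r ≥
      (∑ i, x i) ^ r + (∑ i, y i) ^ r :=
  stmt2_general n r hr x y hx hy
end

section
/- Let 2 ≤ p ≤ q be real numbers and let u₁,…,uₙ and v₁,…,vₙ be nonnegative real numbers with uᵢ ≥ vᵢ for all i. Then (∑(uᵢ+vᵢ)^p)^(q/p) + (∑(uᵢ−vᵢ)^p)^(q/p) ≥ 2(∑uᵢ^p)^(q/p) + 2^(q-1)(∑vᵢ^p)^(q/p). -/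
/-!
Write `σ = ∑ uᵢ ^ p`, `τ = ∑ vᵢ ^ p`, `α = ∑ (uᵢ + vᵢ) ^ p`, `β = ∑ (uᵢ - vᵢ) ^ p`,
`c = 2 ^ (p - 1)` and `r = q / p ≥ 1`. Convexity of `t ↦ t ^ p` gives termwise
`(u + v) ^ p ≥ u ^ p + (2 ^ p - 1) v ^ p`, and for `p ≥ 2` differentiating in `v` gives
`(u + v) ^ p + (u - v) ^ p ≥ 2 u ^ p + 2 ^ (p - 1) v ^ p`; hence `α ≥ σ + (2c - 1)τ` and
`α + β ≥ 2σ + cτ`. What remains is an inequality between four numbers,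
`α ^ r + β ^ r ≥ 2σ ^ r + (2cτ) ^ r / 2`. If `(c - 1)τ ≤ σ`, the pair `(α, β)` weakly majorizes
`(σ + (2c - 1)τ, σ - (c - 1)τ)`, and for that pair the inequality follows by monotonicity in `τ`.
Otherwise `α ^ r` alone suffices, because `σ + (2c - 1)τ` dominates `σ`, `2cτ` and `2σ + cτ`.
-/

open Real Set

theorem le_of_hasDerivAt_of_nonneg {f f' : ℝ → ℝ} {a b : ℝ} (hf : ∀ t, HasDerivAt f (f' t) t)
    (hf' : ∀ t ∈ Ioo a b, 0 ≤ f' t) (hab : a ≤ b) : f a ≤ f b :=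
  have hcont : Continuous f := continuous_iff_continuousAt.2 fun t => (hf t).continuousAt
  monotoneOn_of_hasDerivWithinAt_nonneg (convex_Icc a b) hcont.continuousOn
    (fun t _ => (hf t).hasDerivWithinAt) (by simpa only [interior_Icc])
    (left_mem_Icc.2 hab) (right_mem_Icc.2 hab) hab

theorem hasDerivAt_add_mul_rpow {a k r : ℝ} (hr : 1 ≤ r) (t : ℝ) :
    HasDerivAt (fun t => (a + k * t) ^ r) (k * r * (a + k * t) ^ (r - 1)) t := by
  simpa using (((hasDerivAt_id' t).const_mul k).const_add a).rpow_const (Or.inr hr)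

theorem mul_rpow_sub_one_self {x r : ℝ} (hx : 0 ≤ x) (hr : 1 ≤ r) : x * x ^ (r - 1) = x ^ r := by
  rw [mul_comm, ← rpow_add_one' hx (by linarith), sub_add_cancel]

theorem ConvexOn.map_add_map_le_map_add_map {s : Set ℝ} {f : ℝ → ℝ} (hf : ConvexOn ℝ s f)
    {a b c d : ℝ} (ha : a ∈ s) (hd : d ∈ s) (hab : a ≤ b) (hbd : b ≤ d) (h : b + c = a + d) :
    f b + f c ≤ f a + f d := by
  rcases hab.eq_or_lt with rfl | hab
  · rw [show c = d by linarith, add_comm]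
  have hda : 0 < d - a := by linarith
  set θ := (b - a) / (d - a)
  have hθ₀ : 0 ≤ θ := div_nonneg (by linarith) hda.le
  have hθ₁ : 0 ≤ 1 - θ := sub_nonneg.2 ((div_le_one hda).2 (by linarith))
  have hb := hf.2 ha hd hθ₁ hθ₀ (sub_add_cancel 1 θ)
  have hc := hf.2 ha hd hθ₀ hθ₁ (add_sub_cancel θ 1)
  have eb : (1 - θ) • a + θ • d = b := by simp only [smul_eq_mul, θ]; field_simp; ring
  obtain rfl : c = a + d - b := by linarith
  have ec : θ • a + (1 - θ) • d = a + d - b := by simp only [smul_eq_mul, θ]; field_simp; ring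
  rw [eb] at hb
  rw [ec] at hc
  simp only [smul_eq_mul] at hb hc
  linarith

theorem ConvexOn.map_add_map_le_map_add_map_of_add_le {f : ℝ → ℝ} (hf : ConvexOn ℝ (Ici 0) f)
    (hf' : MonotoneOn f (Ici 0)) {x y α β : ℝ} (hy : 0 ≤ y) (hyx : y ≤ x) (hxα : x ≤ α)
    (hβ : 0 ≤ β) (hsum : x + y ≤ α + β) : f x + f y ≤ f α + f β := by
  rcases le_or_gt y β with hyβ | hβy
  · exact add_le_add (hf' (hy.trans hyx) (hy.trans (hyx.trans hxα)) hxα) (hf' hy hβ hyβ)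
  · have hsplit := hf.map_add_map_le_map_add_map (c := x) (d := x + y - β) hβ
      (by simp only [mem_Ici]; linarith) hβy.le (by linarith) (by ring)
    have hmono : f (x + y - β) ≤ f α :=
      hf' (by simp only [mem_Ici]; linarith) (by simp only [mem_Ici]; linarith) (by linarith)
    linarith

theorem rpow_add_two_rpow_sub_one_mul_rpow_le_add_rpow {x y p : ℝ} (hy : 0 ≤ y) (hyx : y ≤ x)
    (hp : 1 ≤ p) : x ^ p + (2 ^ p - 1) * y ^ p ≤ (x + y) ^ p := by
  have h := (convexOn_rpow hp).map_add_map_le_map_add_map (c := 2 * y) (d := x + y) (mem_Ici.2 hy)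
    (mem_Ici.2 (by linarith)) hyx (by linarith) (by ring)
  rw [mul_rpow zero_le_two hy] at h
  linarith

theorem two_mul_rpow_add_two_rpow_sub_one_mul_rpow_le {x y p : ℝ} (hy : 0 ≤ y) (hyx : y ≤ x)
    (hp : 2 ≤ p) : 2 * x ^ p + 2 ^ (p - 1) * y ^ p ≤ (x + y) ^ p + (x - y) ^ p := by
  have hp1 : 1 ≤ p := by linarith
  have hF := le_of_hasDerivAt_of_nonneg (a := 0) (b := y)
    (f := fun t => (x + 1 * t) ^ p + (x + -1 * t) ^ p - 2 ^ (p - 1) * (0 + 1 * t) ^ p)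
    (fun t => ((hasDerivAt_add_mul_rpow hp1 t).add (hasDerivAt_add_mul_rpow hp1 t)).sub
      ((hasDerivAt_add_mul_rpow hp1 t).const_mul _)) ?_ hy
  · simp only [one_mul, neg_mul, ← sub_eq_add_neg, zero_add, mul_zero, add_zero, sub_zero,
      zero_rpow (by linarith : p ≠ 0)] at hF
    linarith
  rintro t ⟨ht, hty⟩
  -- superadditivity of `s ↦ s ^ (p - 1)` at `x - t` and `2 * t`, whose sum is `x + t`
  have hsuper := add_rpow_le_rpow_add (by linarith : 0 ≤ x - t) (by linarith : 0 ≤ 2 * t)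
    (by linarith : 1 ≤ p - 1)
  rw [mul_rpow zero_le_two ht.le, show x - t + 2 * t = x + t by ring] at hsuper
  simp only [one_mul, neg_mul, ← sub_eq_add_neg, zero_add]
  nlinarith

theorem two_mul_rpow_add_rpow_div_two_le_of_mul_le {σ τ c r : ℝ} (hτ : 0 ≤ τ) (hτσ : τ ≤ σ)
    (hc : 1 ≤ c) (hr : 1 ≤ r) (hcτ : (c - 1) * τ ≤ σ) :
    2 * σ ^ r + (2 * c * τ) ^ r / 2 ≤ (σ + (2 * c - 1) * τ) ^ r + (σ - (c - 1) * τ) ^ r := by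
  have hG := le_of_hasDerivAt_of_nonneg (a := 0) (b := τ)
    (f := fun t => (σ + (2 * c - 1) * t) ^ r + (σ + (1 - c) * t) ^ r - (0 + 2 * c * t) ^ r / 2)
    (fun t => ((hasDerivAt_add_mul_rpow hr t).add (hasDerivAt_add_mul_rpow hr t)).sub
      ((hasDerivAt_add_mul_rpow hr t).div_const 2)) ?_ hτ
  · simp only [mul_zero, add_zero, zero_add, zero_rpow (by linarith : r ≠ 0), zero_div,
      sub_zero] at hG
    rw [show σ + (1 - c) * τ = σ - (c - 1) * τ by ring] at hG
    linarith
  rintro t ⟨ht, htτ⟩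
  -- with `X = σ + (2c - 1)t`, `Y = σ + (1 - c)t` the derivative is
  -- `r ((c - 1) (X ^ (r - 1) - Y ^ (r - 1)) + c (X ^ (r - 1) - (2ct) ^ (r - 1)))`
  have hY : (σ + (1 - c) * t) ^ (r - 1) ≤ (σ + (2 * c - 1) * t) ^ (r - 1) :=
    rpow_le_rpow (by nlinarith) (by nlinarith) (by linarith)
  have h2ct : (0 + 2 * c * t) ^ (r - 1) ≤ (σ + (2 * c - 1) * t) ^ (r - 1) :=
    rpow_le_rpow (by positivity) (by nlinarith) (by linarith)
  nlinarith [mul_nonneg (sub_nonneg.2 hc) (sub_nonneg.2 hY),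
    mul_nonneg (by linarith : (0 : ℝ) ≤ c) (sub_nonneg.2 h2ct)]

theorem two_mul_rpow_add_rpow_div_two_le_of_le_mul {σ τ c r : ℝ} (hτ : 0 ≤ τ) (hτσ : τ ≤ σ)
    (hc : 1 ≤ c) (hr : 1 ≤ r) (hcτ : σ ≤ (c - 1) * τ) :
    2 * σ ^ r + (2 * c * τ) ^ r / 2 ≤ (σ + (2 * c - 1) * τ) ^ r := by
  set x := σ + (2 * c - 1) * τ
  have hσ : 0 ≤ σ := hτ.trans hτσ
  have h2cτ : 0 ≤ 2 * c * τ := by positivity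
  have hx : 0 ≤ x := by nlinarith
  calc 2 * σ ^ r + (2 * c * τ) ^ r / 2
      = 2 * (σ * σ ^ (r - 1)) + 2 * c * τ * (2 * c * τ) ^ (r - 1) / 2 := by
        rw [mul_rpow_sub_one_self hσ hr, mul_rpow_sub_one_self h2cτ hr]
    _ ≤ 2 * (σ * x ^ (r - 1)) + 2 * c * τ * x ^ (r - 1) / 2 := by
        gcongr <;> linarith
    _ = (2 * σ + c * τ) * x ^ (r - 1) := by ring
    _ ≤ x * x ^ (r - 1) := mul_le_mul_of_nonneg_right (by linarith) (rpow_nonneg hx _)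
    _ = x ^ r := mul_rpow_sub_one_self hx hr

theorem two_mul_rpow_add_rpow_div_two_le_rpow_add_rpow {α β σ τ c r : ℝ} (hr : 1 ≤ r)
    (hc : 1 ≤ c) (hτ : 0 ≤ τ) (hτσ : τ ≤ σ) (hβ : 0 ≤ β) (hα : σ + (2 * c - 1) * τ ≤ α)
    (hαβ : 2 * σ + c * τ ≤ α + β) :
    2 * σ ^ r + (2 * c * τ) ^ r / 2 ≤ α ^ r + β ^ r := by
  rcases le_or_gt ((c - 1) * τ) σ with hcτ | hcτ
  · -- `(α, β)` weakly majorizes `(σ + (2c - 1)τ, σ - (c - 1)τ)`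
    have hmaj := (convexOn_rpow hr).map_add_map_le_map_add_map_of_add_le
      (monotoneOn_rpow_Ici_of_exponent_nonneg (by linarith)) (sub_nonneg.2 hcτ)
      (by nlinarith) hα hβ (by linarith)
    linarith [two_mul_rpow_add_rpow_div_two_le_of_mul_le hτ hτσ hc hr hcτ]
  · have hx : (σ + (2 * c - 1) * τ) ^ r ≤ α ^ r := rpow_le_rpow (by nlinarith) hα (by linarith)
    linarith [two_mul_rpow_add_rpow_div_two_le_of_le_mul hτ hτσ hc hr hcτ.le, rpow_nonneg hβ r]

theorem stmt3_general (n : ℕ) (p q : ℝ) (hp : 2 ≤ p) (hpq : p ≤ q)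
    (u v : Fin n → ℝ) (hv : ∀ i, 0 ≤ v i) (huv : ∀ i, v i ≤ u i) :
    (∑ i, (u i + v i) ^ p) ^ (q / p) + (∑ i, (u i - v i) ^ p) ^ (q / p) ≥
      2 * (∑ i, u i ^ p) ^ (q / p) + 2 ^ (q - 1) * (∑ i, v i ^ p) ^ (q / p) := by
  have hp0 : 0 < p := by linarith
  have h2c : 2 * 2 ^ (p - 1) = (2 : ℝ) ^ p := by
    rw [rpow_sub_one two_ne_zero]; ring
  have hα : ∑ i, u i ^ p + (2 * 2 ^ (p - 1) - 1) * ∑ i, v i ^ p ≤ ∑ i, (u i + v i) ^ p := by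
    rw [h2c, Finset.mul_sum, ← Finset.sum_add_distrib]
    exact Finset.sum_le_sum fun i _ =>
      rpow_add_two_rpow_sub_one_mul_rpow_le_add_rpow (hv i) (huv i) (by linarith)
  have hαβ : 2 * ∑ i, u i ^ p + 2 ^ (p - 1) * ∑ i, v i ^ p ≤
      ∑ i, (u i + v i) ^ p + ∑ i, (u i - v i) ^ p := by
    simp only [Finset.mul_sum, ← Finset.sum_add_distrib]
    exact Finset.sum_le_sum fun i _ =>
      two_mul_rpow_add_two_rpow_sub_one_mul_rpow_le (hv i) (huv i) hp
  have hτ : 0 ≤ ∑ i, v i ^ p := Finset.sum_nonneg fun i _ => rpow_nonneg (hv i) p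
  have key := two_mul_rpow_add_rpow_div_two_le_rpow_add_rpow ((one_le_div hp0).2 hpq)
    (one_le_rpow one_le_two (by linarith : 0 ≤ p - 1)) hτ
    (Finset.sum_le_sum fun i _ => rpow_le_rpow (hv i) (huv i) hp0.le)
    (Finset.sum_nonneg fun i _ => rpow_nonneg (sub_nonneg.2 (huv i)) p) hα hαβ
  have hconst : (2 * 2 ^ (p - 1) * ∑ i, v i ^ p) ^ (q / p) / 2 =
      2 ^ (q - 1) * (∑ i, v i ^ p) ^ (q / p) := by
    rw [h2c, mul_rpow (by positivity) hτ, ← rpow_mul zero_le_two, mul_div_cancel₀ q hp0.ne',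
      rpow_sub_one two_ne_zero]
    ring
  rwa [hconst] at key

theorem stmt3 (n : ℕ) (hn : 0 < n) (p q : ℝ) (hp : 2 ≤ p) (hpq : p ≤ q)
    (u v : Fin n → ℝ) (hv : ∀ i, 0 ≤ v i) (huv : ∀ i, v i ≤ u i) :
    (∑ i, (u i + v i) ^ p) ^ (q / p) + (∑ i, (u i - v i) ^ p) ^ (q / p) ≥
      2 * (∑ i, u i ^ p) ^ (q / p) + 2 ^ (q - 1) * (∑ i, v i ^ p) ^ (q / p) :=
  stmt3_general n p q hp hpq u v hv huv
end

section
/- Let 2 ≤ p ≤ q be real numbers and let x₁,…,xₙ and y₁,…,yₙ be nonnegative real numbers. Then (∑|xᵢ+yᵢ|^p)^(q/p) + (∑|xᵢ−yᵢ|^p)^(q/p) ≥ 2((∑xᵢ^p)^(q/p) + (∑yᵢ^p)^(q/p)). -/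
open Real

/-- Superadditivity of rpow for exponent ≥ 1. -/
lemma aux_superadd {a b r : ℝ} (ha : 0 ≤ a) (hb : 0 ≤ b) (hr : 1 ≤ r) :
    a ^ r + b ^ r ≤ (a + b) ^ r := by
  lift a to NNReal using ha
  lift b to NNReal using hb
  have := NNReal.add_rpow_le_rpow_add a b hr
  exact_mod_cast this

/-- Two-point convexity lower bound for rpow. -/
lemma aux_conv {u v r : ℝ} (hu : 0 ≤ u) (hv : 0 ≤ v) (hr : 1 ≤ r) :
    (2 : ℝ) ^ (1 - r) * (u + v) ^ r ≤ u ^ r + v ^ r := by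
  have h2 : (0:ℝ) < (2:ℝ) ^ (1 - r) := Real.rpow_pos_of_pos (by norm_num) _
  have h' : (u + v) ^ r ≤ (2:ℝ) ^ (r - 1) * (u ^ r + v ^ r) := by
    lift u to NNReal using hu
    lift v to NNReal using hv
    have h := NNReal.rpow_add_le_mul_rpow_add_rpow u v hr
    have := NNReal.coe_le_coe.2 h
    push_cast at this
    convert this using 2
  calc (2 : ℝ) ^ (1 - r) * (u + v) ^ r
      ≤ (2 : ℝ) ^ (1 - r) * ((2:ℝ) ^ (r - 1) * (u ^ r + v ^ r)) :=
        mul_le_mul_of_nonneg_left h' h2.le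
    _ = ((2:ℝ) ^ (1 - r) * (2:ℝ) ^ (r - 1)) * (u ^ r + v ^ r) := by ring
    _ = u ^ r + v ^ r := by
        rw [← Real.rpow_add (by norm_num : (0:ℝ) < 2)]
        norm_num

/-- Pointwise Clarkson-type inequality for p ≥ 2. -/
lemma aux_pointwise {p : ℝ} (hp : 2 ≤ p) {a b : ℝ} (ha : 0 ≤ a) (hb : 0 ≤ b) :
    2 * (a ^ p + b ^ p) ≤ (a + b) ^ p + |a - b| ^ p := by
  set s := p / 2 with hs
  have hs1 : 1 ≤ s := by rw [hs]; linarith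
  have hab : 0 ≤ a + b := by linarith
  have habs : 0 ≤ |a - b| := abs_nonneg _
  have hsq : ∀ c : ℝ, 0 ≤ c → c ^ p = (c ^ (2:ℝ)) ^ s := by
    intro c hc
    rw [← Real.rpow_mul hc]
    congr 1
    rw [hs]; ring
  have ha2 : (0:ℝ) ≤ a ^ (2:ℝ) := Real.rpow_nonneg ha _
  have hb2 : (0:ℝ) ≤ b ^ (2:ℝ) := Real.rpow_nonneg hb _
  have hT : (0:ℝ) ≤ a ^ (2:ℝ) + b ^ (2:ℝ) := by linarith
  have key : (a + b) ^ (2:ℝ) + |a - b| ^ (2:ℝ) = 2 * (a ^ (2:ℝ) + b ^ (2:ℝ)) := by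
    rw [Real.rpow_two, Real.rpow_two, Real.rpow_two, Real.rpow_two, sq_abs]
    ring
  calc 2 * (a ^ p + b ^ p)
      = 2 * ((a ^ (2:ℝ)) ^ s + (b ^ (2:ℝ)) ^ s) := by rw [hsq a ha, hsq b hb]
    _ ≤ 2 * ((a ^ (2:ℝ) + b ^ (2:ℝ)) ^ s) :=
        mul_le_mul_of_nonneg_left (aux_superadd ha2 hb2 hs1) (by norm_num)
    _ = (2:ℝ) ^ (1 - s) * (2 * (a ^ (2:ℝ) + b ^ (2:ℝ))) ^ s := by
        rw [Real.mul_rpow (by norm_num) hT, ← mul_assoc,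
          ← Real.rpow_add (by norm_num : (0:ℝ) < 2)]
        norm_num
    _ = (2:ℝ) ^ (1 - s) * ((a + b) ^ (2:ℝ) + |a - b| ^ (2:ℝ)) ^ s := by rw [key]
    _ ≤ ((a + b) ^ (2:ℝ)) ^ s + (|a - b| ^ (2:ℝ)) ^ s :=
        aux_conv (Real.rpow_nonneg hab _) (Real.rpow_nonneg habs _) hs1
    _ = (a + b) ^ p + |a - b| ^ p := by rw [← hsq _ hab, ← hsq _ habs]

theorem stmt4 (n : ℕ) (hn : 0 < n) (p q : ℝ) (hp : 2 ≤ p) (hpq : p ≤ q)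
    (x y : Fin n → ℝ) (hx : ∀ i, 0 ≤ x i) (hy : ∀ i, 0 ≤ y i) :
    (∑ i, |x i + y i| ^ p) ^ (q / p) + (∑ i, |x i - y i| ^ p) ^ (q / p) ≥
      2 * ((∑ i, x i ^ p) ^ (q / p) + (∑ i, y i ^ p) ^ (q / p)) := by
  have hp0 : (0:ℝ) < p := by linarith
  set r := q / p with hrdef
  have hr1 : 1 ≤ r := (one_le_div hp0).2 hpq
  set Sx := ∑ i, x i ^ p with hSx
  set Sy := ∑ i, y i ^ p with hSy
  set S1 := ∑ i, |x i + y i| ^ p with hS1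
  set S2 := ∑ i, |x i - y i| ^ p with hS2
  have hSx0 : 0 ≤ Sx := Finset.sum_nonneg fun i _ => Real.rpow_nonneg (hx i) _
  have hSy0 : 0 ≤ Sy := Finset.sum_nonneg fun i _ => Real.rpow_nonneg (hy i) _
  have hS10 : 0 ≤ S1 := Finset.sum_nonneg fun i _ => Real.rpow_nonneg (abs_nonneg _) _
  have hS20 : 0 ≤ S2 := Finset.sum_nonneg fun i _ => Real.rpow_nonneg (abs_nonneg _) _
  have hsum : 2 * (Sx + Sy) ≤ S1 + S2 := by
    rw [hSx, hSy, hS1, hS2, ← Finset.sum_add_distrib, ← Finset.sum_add_distrib,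
      Finset.mul_sum]
    refine Finset.sum_le_sum fun i _ => ?_
    have := aux_pointwise hp (hx i) (hy i)
    rwa [abs_of_nonneg (by have := hx i; have := hy i; linarith : 0 ≤ x i + y i)]
  have step1 : 2 * (Sx ^ r + Sy ^ r) ≤ 2 * (Sx + Sy) ^ r :=
    mul_le_mul_of_nonneg_left (aux_superadd hSx0 hSy0 hr1) (by norm_num)
  have step2 : 2 * (Sx + Sy) ^ r = (2:ℝ) ^ (1 - r) * (2 * (Sx + Sy)) ^ r := by
    rw [Real.mul_rpow (by norm_num) (by linarith), ← mul_assoc,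
      ← Real.rpow_add (by norm_num : (0:ℝ) < 2)]
    norm_num
  have step3 : (2:ℝ) ^ (1 - r) * (2 * (Sx + Sy)) ^ r ≤ (2:ℝ) ^ (1 - r) * (S1 + S2) ^ r := by
    refine mul_le_mul_of_nonneg_left ?_ (Real.rpow_pos_of_pos (by norm_num) _).le
    exact Real.rpow_le_rpow (by linarith) hsum (by linarith)
  have step4 : (2:ℝ) ^ (1 - r) * (S1 + S2) ^ r ≤ S1 ^ r + S2 ^ r := aux_conv hS10 hS20 hr1
  linarith
end

section
/- Let p ≥ 2 be a real number and let u₁,…,uₙ and v₁,…,vₙ be nonnegative real numbers with uᵢ ≥ vᵢ for all i. Then ∑(uᵢ+vᵢ)^p + ∑(uᵢ−vᵢ)^p ≥ 2∑uᵢ^p + 2^(p-1)∑vᵢ^p. -/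
lemma real_rpow_superadd (x y q : ℝ) (hx : 0 ≤ x) (hy : 0 ≤ y) (hq : 1 ≤ q) :
    x ^ q + y ^ q ≤ (x + y) ^ q := by
  have h := NNReal.add_rpow_le_rpow_add (⟨x, hx⟩) (⟨y, hy⟩) hq
  have := NNReal.coe_le_coe.2 h
  push_cast at this
  exact this

lemma key_pointwise (p : ℝ) (hp : 2 ≤ p) (u v : ℝ) (hv : 0 ≤ v) (huv : v ≤ u) :
    2 * u ^ p + 2 ^ (p - 1) * v ^ p ≤ (u + v) ^ p + (u - v) ^ p := by
  have hu : 0 ≤ u := le_trans hv huv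
  set f : ℝ → ℝ := fun t => (u + t) ^ p + (u - t) ^ p - 2 ^ (p - 1) * t ^ p with hf
  have hp1 : (1:ℝ) ≤ p := by linarith
  have hderiv : ∀ t : ℝ, HasDerivAt f
      (1 * p * (u + t) ^ (p - 1) + (-1) * p * (u - t) ^ (p - 1)
        - 2 ^ (p - 1) * (p * t ^ (p - 1))) t := by
    intro t
    have h1 : HasDerivAt (fun t : ℝ => (u + t) ^ p) (1 * p * (u + t) ^ (p - 1)) t :=
      ((hasDerivAt_id t).const_add u).rpow_const (Or.inr hp1)
    have h2 : HasDerivAt (fun t : ℝ => (u - t) ^ p) ((-1) * p * (u - t) ^ (p - 1)) t :=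
      ((hasDerivAt_id t).const_sub u).rpow_const (Or.inr hp1)
    have h3 : HasDerivAt (fun t : ℝ => 2 ^ (p - 1) * t ^ p)
        (2 ^ (p - 1) * (p * t ^ (p - 1))) t :=
      (Real.hasDerivAt_rpow_const (Or.inr hp1)).const_mul _
    exact (h1.add h2).sub h3
  have hmono : MonotoneOn f (Set.Icc 0 u) := by
    apply monotoneOn_of_deriv_nonneg (convex_Icc 0 u)
    · exact fun x _ => (hderiv x).differentiableAt.continuousAt.continuousWithinAt
    · intro t ht
      exact (hderiv t).differentiableAt.differentiableWithinAt
    · intro t ht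
      rw [interior_Icc] at ht
      obtain ⟨ht0, htu⟩ := ht
      rw [(hderiv t).deriv]
      have hpp : 0 < p := by linarith
      have h2t : (2:ℝ) ^ (p - 1) * t ^ (p - 1) = (2 * t) ^ (p - 1) := by
        rw [Real.mul_rpow (by norm_num) ht0.le]
      have hsup : (u - t) ^ (p - 1) + (2 * t) ^ (p - 1) ≤ (u + t) ^ (p - 1) := by
        have := real_rpow_superadd (u - t) (2 * t) (p - 1)
          (by linarith) (by linarith) (by linarith : 1 ≤ p - 1)
        convert this using 2
        ring
      nlinarith [hsup, Real.rpow_nonneg (by linarith : (0:ℝ) ≤ u - t) (p - 1),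
        Real.rpow_nonneg (by linarith : (0:ℝ) ≤ 2 * t) (p - 1)]
  have h0 : f 0 ≤ f v := hmono (Set.mem_Icc.2 ⟨le_refl 0, hu⟩)
    (Set.mem_Icc.2 ⟨hv, huv⟩) hv
  have hf0 : f 0 = 2 * u ^ p := by
    simp only [hf, add_zero, sub_zero]
    rw [Real.zero_rpow (by linarith : p ≠ 0)]
    ring
  have hfv : f v = (u + v) ^ p + (u - v) ^ p - 2 ^ (p - 1) * v ^ p := rfl
  rw [hf0, hfv] at h0
  linarith

theorem stmt5 (n : ℕ) (hn : 0 < n) (p : ℝ) (hp : 2 ≤ p)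
    (u v : Fin n → ℝ) (hv : ∀ i, 0 ≤ v i) (huv : ∀ i, v i ≤ u i) :
    ∑ i, (u i + v i) ^ p + ∑ i, (u i - v i) ^ p ≥
      2 * ∑ i, u i ^ p + 2 ^ (p - 1) * ∑ i, v i ^ p := by
  rw [ge_iff_le, ← Finset.sum_add_distrib, Finset.mul_sum, Finset.mul_sum,
    ← Finset.sum_add_distrib]
  exact Finset.sum_le_sum fun i _ => key_pointwise p hp (u i) (v i) (hv i) (huv i)
end

section
/- Let 2 ≤ p ≤ q be real numbers, and let u, v be functions in L^p(μ) on a measure space (X, μ) with u ≥ v ≥ 0 almost everywhere. Then ‖u+v‖_p^q + ‖u−v‖_p^q ≥ 2(‖u‖_p^q + 2^(q-2)‖v‖_p^q). -/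
/-!
Pointwise, for `0 ≤ y ≤ x` and `p ≥ 2`, `(x + y) ^ p + (x - y) ^ p ≥ 2 x ^ p + 2 ^ (p - 1) y ^ p`:
the difference of the two sides is increasing in `y` by superadditivity of `t ↦ t ^ (p - 1)`.
Integrating gives the theorem for `q = p`. To pass to `q ≥ p`, raise everything to the power
`s = q / p ≥ 1`: for the convex function `t ↦ t ^ s`, the bound `2 c + e / 2 ≤ x + y` with `e ≤ x`
implies `2 c ^ s + e ^ s / 2 ≤ x ^ s + y ^ s`. It is applied to `x = ‖u + v‖ ^ p`,
`y = ‖u - v‖ ^ p`, `c = ‖u‖ ^ p` and `e = (2 ‖v‖) ^ p`, where `e ≤ x` because `2 v ≤ u + v`.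
-/

open MeasureTheory ENNReal Set
open scoped NNReal

theorem ConvexOn.map_add_sub_map_le_of_le {s : Set ℝ} {f : ℝ → ℝ} (hf : ConvexOn ℝ s f)
    {a b δ : ℝ} (hb : b ∈ s) (ha : a + δ ∈ s) (hba : b ≤ a) (hδ : 0 ≤ δ) :
    f (b + δ) - f b ≤ f (a + δ) - f a := by
  rcases hδ.eq_or_lt with rfl | hδ
  · simp
  -- `a` and `b + δ` are the convex combinations of `a + δ` and `b` with weights `(1 - l, l)`
  -- and `(l, 1 - l)`
  set l := δ / (a + δ - b)
  have hl : l * (a + δ - b) = δ := div_mul_cancel₀ δ (by linarith)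
  have hl0 : 0 ≤ l := div_nonneg hδ.le (by linarith)
  have hl1 : l ≤ 1 := (div_le_one (by linarith)).mpr (by linarith)
  have h₁ := hf.2 ha hb (sub_nonneg.mpr hl1) hl0 (by ring)
  have h₂ := hf.2 ha hb hl0 (sub_nonneg.mpr hl1) (by ring)
  simp only [smul_eq_mul] at h₁ h₂
  rw [show (1 - l) * (a + δ) + l * b = a by linear_combination -hl] at h₁
  rw [show l * (a + δ) + (1 - l) * b = b + δ by linear_combination hl] at h₂
  linarith

namespace Real

theorem two_mul_rpow_add_le_rpow_add_add_rpow_sub {p : ℝ} (hp : 2 ≤ p) {x y : ℝ} (hy : 0 ≤ y)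
    (hyx : y ≤ x) : 2 * x ^ p + 2 ^ (p - 1) * y ^ p ≤ (x + y) ^ p + (x - y) ^ p := by
  have hp0 : 0 ≤ p := by linarith
  let F : ℝ → ℝ := fun t ↦ (x + t) ^ p + (x - t) ^ p - 2 ^ (p - 1) * t ^ p
  let F' : ℝ → ℝ := fun t ↦
    p * (x + t) ^ (p - 1) - p * (x - t) ^ (p - 1) - 2 ^ (p - 1) * (p * t ^ (p - 1))
  have hF : MonotoneOn F (Icc 0 x) := by
    refine monotoneOn_of_hasDerivWithinAt_nonneg (f' := F') (convex_Icc 0 x) (by fun_prop)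
      (fun t ht ↦ ?_) (fun t ht ↦ ?_) <;> rw [interior_Icc] at ht <;> obtain ⟨ht0, htx⟩ := ht
    · have h₁ := ((hasDerivAt_id' t).const_add x).rpow_const (p := p) (.inl (by linarith))
      have h₂ := ((hasDerivAt_id' t).const_sub x).rpow_const (p := p) (.inl (by linarith))
      have h₃ := ((hasDerivAt_id' t).rpow_const (p := p) (.inl ht0.ne')).const_mul (2 ^ (p - 1))
      exact (((h₁.add h₂).sub h₃).congr_deriv (by simp only [F']; ring)).hasDerivWithinAt
    · have h := add_rpow_le_rpow_add (by linarith : 0 ≤ x - t) (by linarith : 0 ≤ 2 * t)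
        (by linarith : 1 ≤ p - 1)
      rw [mul_rpow zero_le_two ht0.le, show x - t + 2 * t = x + t by ring] at h
      simp only [F']
      nlinarith
  have := hF ⟨le_rfl, hy.trans hyx⟩ ⟨hy, hyx⟩ hy
  simp only [F, add_zero, sub_zero, zero_rpow (by linarith : p ≠ 0), mul_zero] at this
  linarith

theorem rpow_le_mul_rpow_sub_one {s t m : ℝ} (hs : 1 ≤ s) (ht : 0 ≤ t) (htm : t ≤ m) :
    t ^ s ≤ t * m ^ (s - 1) := by
  calc t ^ s = t * t ^ (s - 1) := by rw [← rpow_one_add' ht (by linarith), add_sub_cancel]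
    _ ≤ t * m ^ (s - 1) := by gcongr

theorem two_mul_rpow_add_div_two_le {s : ℝ} (hs : 1 ≤ s) {a b : ℝ} (ha : 0 ≤ a) (hb : 0 ≤ b) :
    2 * ((a + b) / 2) ^ s ≤ a ^ s + b ^ s := by
  have h := (convexOn_rpow hs).2 ha hb (by norm_num : (0 : ℝ) ≤ 1 / 2)
    (by norm_num : (0 : ℝ) ≤ 1 / 2) (by norm_num)
  simp only [smul_eq_mul] at h
  rw [show 1 / 2 * a + 1 / 2 * b = (a + b) / 2 by ring] at h
  linarith

theorem div_two_rpow_le_rpow_div_two {s : ℝ} (hs : 1 ≤ s) {e : ℝ} (he : 0 ≤ e) :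
    (e / 2) ^ s ≤ e ^ s / 2 := by
  rw [div_rpow he zero_le_two]
  gcongr
  simpa using rpow_le_rpow_of_exponent_le one_le_two hs

theorem two_mul_rpow_add_rpow_div_two_le {s : ℝ} (hs : 1 ≤ s) {x y c e : ℝ} (hy : 0 ≤ y)
    (hc : 0 ≤ c) (he : 0 ≤ e) (hex : e ≤ x) (h : 2 * c + e / 2 ≤ x + y) :
    2 * c ^ s + e ^ s / 2 ≤ x ^ s + y ^ s := by
  have hx : 0 ≤ x := he.trans hex
  have hys : 0 ≤ y ^ s := rpow_nonneg hy s
  rcases le_or_gt (2 * c + e / 2) x with h_le | h_gt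
  · -- `t ^ s` lies below its chord through `0` and `x`
    have hxs : x ^ s = x * x ^ (s - 1) := by
      rw [← rpow_one_add' hx (by linarith), add_sub_cancel]
    have hc' := rpow_le_mul_rpow_sub_one hs hc (by linarith : c ≤ x)
    have he' := rpow_le_mul_rpow_sub_one hs he hex
    nlinarith [rpow_nonneg hx (s - 1)]
  rcases le_or_gt (3 * e / 4) c with hce | hce
  · -- the same chord bound, now below `m = c + e / 4 ≤ (x + y) / 2`
    have hc' := rpow_le_mul_rpow_sub_one hs hc (by linarith : c ≤ c + e / 4)
    have he' := rpow_le_mul_rpow_sub_one hs he (by linarith : e ≤ c + e / 4)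
    have hm : (c + e / 4) ^ s = c * (c + e / 4) ^ (s - 1) + e / 4 * (c + e / 4) ^ (s - 1) := by
      rw [← add_mul, ← rpow_one_add' (by positivity) (by linarith), add_sub_cancel]
    have hmxy : (c + e / 4) ^ s ≤ ((x + y) / 2) ^ s := by gcongr; linarith
    linarith [two_mul_rpow_add_div_two_le hs hx hy]
  · -- split `2 c` as `e / 2 + (2 c - e / 2)`, then spread `e ≤ x` and `2 c - e / 2` apart
    have hspread := (convexOn_rpow hs).map_add_sub_map_le_of_le (a := e)
      (b := 2 * c + e / 2 - x) (δ := x - e) (by simp; linarith) (by simp; linarith)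
      (by linarith) (by linarith)
    rw [show 2 * c + e / 2 - x + (x - e) = 2 * c - e / 2 by ring,
      show e + (x - e) = x by ring] at hspread
    have hmid := two_mul_rpow_add_div_two_le hs (a := e / 2) (b := 2 * c - e / 2)
      (by linarith) (by linarith)
    rw [show (e / 2 + (2 * c - e / 2)) / 2 = c by ring] at hmid
    have hy' : (2 * c + e / 2 - x) ^ s ≤ y ^ s := by gcongr; linarith
    linarith [div_two_rpow_le_rpow_div_two hs he]

theorem two_mul_rpow_add_le_of_exponent_le {p q : ℝ} (hp : 0 < p) (hpq : p ≤ q) {x y c d : ℝ}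
    (hy : 0 ≤ y) (hc : 0 ≤ c) (hd : 0 ≤ d) (hdx : 2 * d ≤ x)
    (h : 2 * c ^ p + 2 ^ (p - 1) * d ^ p ≤ x ^ p + y ^ p) :
    2 * c ^ q + 2 ^ (q - 1) * d ^ q ≤ x ^ q + y ^ q := by
  have hx : 0 ≤ x := by linarith
  have two_mul_rpow_div_two : ∀ r : ℝ, (2 * d) ^ r / 2 = 2 ^ (r - 1) * d ^ r := fun r ↦ by
    rw [mul_rpow zero_le_two hd, rpow_sub_one two_ne_zero]
    ring
  have rpow_rpow : ∀ {t : ℝ}, 0 ≤ t → (t ^ p) ^ (q / p) = t ^ q := fun ht ↦ by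
    rw [← rpow_mul ht, mul_div_cancel₀ q hp.ne']
  have h' := two_mul_rpow_add_rpow_div_two_le ((one_le_div hp).mpr hpq) (rpow_nonneg hy p)
    (rpow_nonneg hc p) (rpow_nonneg (by positivity) p) (rpow_le_rpow (by positivity) hdx hp.le)
    (by rwa [two_mul_rpow_div_two])
  rwa [rpow_rpow hx, rpow_rpow hy, rpow_rpow hc, rpow_rpow (by positivity),
    two_mul_rpow_div_two] at h'

end Real

namespace ENNReal

theorem two_mul_coe_rpow_add_le_iff {r : ℝ} (hr : 0 ≤ r) {x y c d : ℝ≥0} :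
    2 * (c : ℝ≥0∞) ^ r + 2 ^ (r - 1) * (d : ℝ≥0∞) ^ r ≤ (x : ℝ≥0∞) ^ r + (y : ℝ≥0∞) ^ r ↔
      2 * (c : ℝ) ^ r + 2 ^ (r - 1) * (d : ℝ) ^ r ≤ (x : ℝ) ^ r + (y : ℝ) ^ r := by
  simp only [← coe_rpow_of_nonneg _ hr]
  rw [← coe_ofNat, ← coe_rpow_of_ne_zero two_ne_zero]
  norm_cast

theorem two_mul_rpow_add_le_of_exponent_le {p q : ℝ} (hp : 0 < p) (hpq : p ≤ q)
    {x y c d : ℝ≥0∞} (hdx : 2 * d ≤ x) (h : 2 * c ^ p + 2 ^ (p - 1) * d ^ p ≤ x ^ p + y ^ p) :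
    2 * c ^ q + 2 ^ (q - 1) * d ^ q ≤ x ^ q + y ^ q := by
  have hq : 0 < q := hp.trans_le hpq
  rcases eq_or_ne x ∞ with rfl | hx
  · simp [top_rpow_of_pos hq]
  rcases eq_or_ne y ∞ with rfl | hy
  · simp [top_rpow_of_pos hq]
  have hc : c ≠ ∞ := by
    rintro rfl
    simp [top_rpow_of_pos hp, rpow_eq_top_iff, hx, hy, hp.not_gt] at h
  have hd : d ≠ ∞ := ne_top_of_le_ne_top hx ((le_mul_of_one_le_left' one_le_two).trans hdx)
  lift x to ℝ≥0 using hx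
  lift y to ℝ≥0 using hy
  lift c to ℝ≥0 using hc
  lift d to ℝ≥0 using hd
  rw [two_mul_coe_rpow_add_le_iff hp.le] at h
  rw [two_mul_coe_rpow_add_le_iff hq.le]
  exact Real.two_mul_rpow_add_le_of_exponent_le hp hpq y.2 c.2 d.2 (mod_cast hdx) h

end ENNReal

namespace MeasureTheory

variable {α : Type*} [MeasurableSpace α] {μ : Measure α}

theorem eLpNorm_ofReal_rpow_eq_lintegral {E : Type*} [NormedAddCommGroup E] {p : ℝ} (hp : 0 < p)
    (f : α → E) : eLpNorm f (ENNReal.ofReal p) μ ^ p = ∫⁻ x, ‖f x‖ₑ ^ p ∂μ := by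
  rw [eLpNorm_eq_eLpNorm' (by simpa using hp) ofReal_ne_top, toReal_ofReal hp.le,
    lintegral_rpow_enorm_eq_rpow_eLpNorm' hp]

theorem two_mul_eLpNorm_rpow_add_le {p : ℝ} (hp : 2 ≤ p) {u v : α → ℝ} (hu : AEMeasurable u μ)
    (hv : AEMeasurable v μ) (h : ∀ᵐ x ∂μ, 0 ≤ v x ∧ v x ≤ u x) :
    2 * eLpNorm u (ENNReal.ofReal p) μ ^ p + 2 ^ (p - 1) * eLpNorm v (ENNReal.ofReal p) μ ^ p ≤
      eLpNorm (u + v) (ENNReal.ofReal p) μ ^ p + eLpNorm (u - v) (ENNReal.ofReal p) μ ^ p := by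
  have hp0 : 0 < p := by linarith
  have pointwise : ∀ᵐ x ∂μ, 2 * ‖u x‖ₑ ^ p + 2 ^ (p - 1) * ‖v x‖ₑ ^ p ≤
      ‖(u + v) x‖ₑ ^ p + ‖(u - v) x‖ₑ ^ p := by
    filter_upwards [h] with x ⟨hvx, hvux⟩
    simp only [enorm_eq_nnnorm, Pi.add_apply, Pi.sub_apply]
    rw [two_mul_coe_rpow_add_le_iff hp0.le]
    simp only [coe_nnnorm, Real.norm_of_nonneg (hvx.trans hvux), Real.norm_of_nonneg hvx,
      Real.norm_of_nonneg (by linarith : 0 ≤ u x + v x),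
      Real.norm_of_nonneg (by linarith : 0 ≤ u x - v x)]
    exact Real.two_mul_rpow_add_le_rpow_add_add_rpow_sub hp hvx hvux
  simp only [eLpNorm_ofReal_rpow_eq_lintegral hp0]
  calc 2 * ∫⁻ x, ‖u x‖ₑ ^ p ∂μ + 2 ^ (p - 1) * ∫⁻ x, ‖v x‖ₑ ^ p ∂μ
      ≤ ∫⁻ x, 2 * ‖u x‖ₑ ^ p + 2 ^ (p - 1) * ‖v x‖ₑ ^ p ∂μ :=
        (add_le_add (lintegral_const_mul_le _ _) (lintegral_const_mul_le _ _)).trans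
          (le_lintegral_add _ _)
    _ ≤ ∫⁻ x, ‖(u + v) x‖ₑ ^ p + ‖(u - v) x‖ₑ ^ p ∂μ := lintegral_mono_ae pointwise
    _ = ∫⁻ x, ‖(u + v) x‖ₑ ^ p ∂μ + ∫⁻ x, ‖(u - v) x‖ₑ ^ p ∂μ :=
        lintegral_add_left' ((hu.add hv).enorm.pow_const p) _

theorem two_mul_eLpNorm_le_eLpNorm_add {p : ℝ≥0∞} {u v : α → ℝ}
    (h : ∀ᵐ x ∂μ, 0 ≤ v x ∧ v x ≤ u x) : 2 * eLpNorm v p μ ≤ eLpNorm (u + v) p μ := by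
  rw [← ofReal_ofNat 2, ← Real.enorm_of_nonneg zero_le_two, ← eLpNorm_const_smul]
  refine eLpNorm_mono_ae_real ?_
  filter_upwards [h] with x ⟨hvx, hvux⟩
  rw [Pi.smul_apply, smul_eq_mul, Real.norm_of_nonneg (by positivity), Pi.add_apply]
  linarith

end MeasureTheory

theorem stmt6 {X : Type*} [MeasurableSpace X] (μ : Measure X) (p q : ℝ)
    (hp : 2 ≤ p) (hpq : p ≤ q) (u v : X → ℝ)
    (hu : MemLp u (ENNReal.ofReal p) μ) (hv : MemLp v (ENNReal.ofReal p) μ)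
    (h : ∀ᵐ x ∂μ, 0 ≤ v x ∧ v x ≤ u x) :
    eLpNorm (u + v) (ENNReal.ofReal p) μ ^ q + eLpNorm (u - v) (ENNReal.ofReal p) μ ^ q ≥
      2 * (eLpNorm u (ENNReal.ofReal p) μ ^ q +
        (2 : ℝ≥0∞) ^ (q - 2) * eLpNorm v (ENNReal.ofReal p) μ ^ q) := by
  have two_mul_two_rpow : (2 : ℝ≥0∞) * 2 ^ (q - 2) = 2 ^ (q - 1) := by
    rw [show q - 1 = 1 + (q - 2) by ring, ENNReal.rpow_add _ _ two_ne_zero ofNat_ne_top, rpow_one]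
  rw [ge_iff_le, mul_add, ← mul_assoc, two_mul_two_rpow]
  exact ENNReal.two_mul_rpow_add_le_of_exponent_le (by linarith) hpq
    (two_mul_eLpNorm_le_eLpNorm_add h)
    (two_mul_eLpNorm_rpow_add_le hp hu.aemeasurable hv.aemeasurable h)
end

section
/- Let 2 ≤ p ≤ q be real numbers, and let x, y be nonnegative functions in L^p(μ) on a measure space (X, μ). Then ‖x+y‖_p^q + ‖x−y‖_p^q ≥ 2(‖x‖_p^q + ‖y‖_p^q). -/
/-!
For `p = 2` the pointwise inequality `2(|u|² + |v|²) ≤ |u + v|² + |u - v|²` is the parallelogram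
law. Raising an inequality `2(a + b) ≤ c + d` to a power `r ≥ 1` preserves its shape, because
`a^r + b^r ≤ (a + b)^r` and `(c + d)^r ≤ 2^(r-1)(c^r + d^r)`. Using this with `r = p/2` gives the
pointwise inequality for the `p`-th powers; integrating it and using it once more with `r = q/p`
gives the inequality for the `q`-th powers of the `L^p` norms.
-/

open MeasureTheory
open scoped ENNReal

namespace ENNReal

theorem two_mul_add_rpow_le_of_two_mul_add_le {r : ℝ} (hr : 1 ≤ r) {a b c d : ℝ≥0∞}
    (h : 2 * (a + b) ≤ c + d) : 2 * (a ^ r + b ^ r) ≤ c ^ r + d ^ r := by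
  have hr0 : 0 ≤ r := by linarith
  have two_rpow_inv (s : ℝ) : (2 : ℝ≥0∞) ^ (-s) * 2 ^ s = 1 := by
    rw [← ENNReal.rpow_add _ _ two_ne_zero ofNat_ne_top, neg_add_cancel, rpow_zero]
  calc 2 * (a ^ r + b ^ r) ≤ 2 * (a + b) ^ r := by gcongr; exact add_rpow_le_rpow_add a b hr
    _ = 2 ^ (1 - r) * (2 * (a + b)) ^ r := by
        rw [mul_rpow_of_nonneg _ _ hr0, ← mul_assoc, ← ENNReal.rpow_add _ _ two_ne_zero
          ofNat_ne_top, sub_add_cancel, rpow_one]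
    _ ≤ 2 ^ (1 - r) * (c + d) ^ r := by gcongr
    _ ≤ 2 ^ (1 - r) * (2 ^ (r - 1) * (c ^ r + d ^ r)) := by
        gcongr; exact rpow_add_le_mul_rpow_add_rpow c d hr
    _ = c ^ r + d ^ r := by rw [← mul_assoc, ← neg_sub, two_rpow_inv, one_mul]

end ENNReal

section

variable {E : Type*} [NormedAddCommGroup E] [InnerProductSpace ℝ E] {p : ℝ}

theorem two_mul_enorm_rpow_add_le (hp : 2 ≤ p) (u v : E) :
    2 * (‖u‖ₑ ^ p + ‖v‖ₑ ^ p) ≤ ‖u + v‖ₑ ^ p + ‖u - v‖ₑ ^ p := by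
  have parallelogram : 2 * (‖u‖ₑ ^ (2 : ℝ) + ‖v‖ₑ ^ (2 : ℝ)) =
      ‖u + v‖ₑ ^ (2 : ℝ) + ‖u - v‖ₑ ^ (2 : ℝ) := by
    simp only [ENNReal.rpow_two, enorm_eq_nnnorm]
    norm_cast
    ext
    push_cast
    exact (parallelogram_law_with_norm ℝ u v).symm
  have rpow_eq (w : E) : ‖w‖ₑ ^ p = (‖w‖ₑ ^ (2 : ℝ)) ^ (p / 2) := by
    rw [← ENNReal.rpow_mul, mul_div_cancel₀ _ two_ne_zero]
  simp only [rpow_eq]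
  exact ENNReal.two_mul_add_rpow_le_of_two_mul_add_le (by linarith) parallelogram.le

variable {X : Type*} [MeasurableSpace X] {μ : Measure X} {f g : X → E}

theorem two_mul_lintegral_enorm_rpow_add_le (hp : 2 ≤ p) (hf : AEStronglyMeasurable f μ)
    (hg : AEStronglyMeasurable g μ) :
    2 * (∫⁻ t, ‖f t‖ₑ ^ p ∂μ + ∫⁻ t, ‖g t‖ₑ ^ p ∂μ) ≤
      ∫⁻ t, ‖f t + g t‖ₑ ^ p ∂μ + ∫⁻ t, ‖f t - g t‖ₑ ^ p ∂μ := by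
  rw [← lintegral_add_left' (hf.enorm.pow_const p),
    ← lintegral_add_left' (f := fun t => ‖f t + g t‖ₑ ^ p) ((hf.add hg).enorm.pow_const p),
    ← lintegral_const_mul' _ _ ENNReal.ofNat_ne_top]
  exact lintegral_mono fun t => two_mul_enorm_rpow_add_le hp (f t) (g t)

theorem two_mul_eLpNorm_rpow_add_le {p : ℝ≥0∞} (hp : 2 ≤ p) (hp_top : p ≠ ∞) {q : ℝ}
    (hpq : p.toReal ≤ q) (hf : AEStronglyMeasurable f μ) (hg : AEStronglyMeasurable g μ) :
    2 * (eLpNorm f p μ ^ q + eLpNorm g p μ ^ q) ≤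
      eLpNorm (f + g) p μ ^ q + eLpNorm (f - g) p μ ^ q := by
  have hp2 : 2 ≤ p.toReal := by
    simpa using ENNReal.toReal_mono hp_top hp
  have hp0 : 0 < p.toReal := by linarith
  have rpow_eq (h : X → E) :
      eLpNorm h p μ ^ q = (∫⁻ t, ‖h t‖ₑ ^ p.toReal ∂μ) ^ (q / p.toReal) := by
    rw [eLpNorm_eq_eLpNorm' (by positivity) hp_top, lintegral_rpow_enorm_eq_rpow_eLpNorm' hp0,
      ← ENNReal.rpow_mul, mul_div_cancel₀ _ hp0.ne']
  simp only [rpow_eq]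
  exact ENNReal.two_mul_add_rpow_le_of_two_mul_add_le ((one_le_div hp0).2 hpq)
    (two_mul_lintegral_enorm_rpow_add_le hp2 hf hg)

end

theorem stmt7_general {X : Type*} [MeasurableSpace X] (μ : Measure X) (p q : ℝ)
    (hp : 2 ≤ p) (hpq : p ≤ q) (x y : X → ℝ)
    (hx : MemLp x (ENNReal.ofReal p) μ) (hy : MemLp y (ENNReal.ofReal p) μ) :
    eLpNorm (x + y) (ENNReal.ofReal p) μ ^ q + eLpNorm (x - y) (ENNReal.ofReal p) μ ^ q ≥
      2 * (eLpNorm x (ENNReal.ofReal p) μ ^ q + eLpNorm y (ENNReal.ofReal p) μ ^ q) := by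
  have hp' : 2 ≤ ENNReal.ofReal p := by simpa using ENNReal.ofReal_le_ofReal hp
  refine two_mul_eLpNorm_rpow_add_le hp' ENNReal.ofReal_ne_top ?_ hx.1 hy.1
  rwa [ENNReal.toReal_ofReal (by linarith)]

theorem stmt7 {X : Type*} [MeasurableSpace X] (μ : Measure X) (p q : ℝ)
    (hp : 2 ≤ p) (hpq : p ≤ q) (x y : X → ℝ)
    (hx : MemLp x (ENNReal.ofReal p) μ) (hy : MemLp y (ENNReal.ofReal p) μ)
    (hx0 : ∀ᵐ t ∂μ, 0 ≤ x t) (hy0 : ∀ᵐ t ∂μ, 0 ≤ y t) :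
    eLpNorm (x + y) (ENNReal.ofReal p) μ ^ q + eLpNorm (x - y) (ENNReal.ofReal p) μ ^ q ≥
      2 * (eLpNorm x (ENNReal.ofReal p) μ ^ q + eLpNorm y (ENNReal.ofReal p) μ ^ q) :=
  stmt7_general μ p q hp hpq x y hx hy
end

section
/- Let 2 ≤ p ≤ q be real numbers and let u, v be real sequences in ℓ^p with uₙ ≥ vₙ ≥ 0 for all n. Then ‖u+v‖_p^q + ‖u−v‖_p^q ≥ 2(‖u‖_p^q + 2^(q-2)‖v‖_p^q). -/
/-!
Write `q = p r` with `r ≥ 1`, and for `t ∈ [0, 1]` put `P t = ∑ (u + t v)^p`, `Q t = ∑ (u - t v)^p`,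
`K = ∑ v^p`. On finite sums, `h t = P t ^ r + Q t ^ r - 2^(q-1) t^q K^r` is nondecreasing: up to
the factor `q`, its derivative is `P^(r-1) A - Q^(r-1) B - (2t)^(q-1) K^r` with
`A, B = ∑ (u ± t v)^(p-1) v`, and this is nonnegative because `Q ≤ P`, `(2t)^p K ≤ P` and,
by superadditivity of `x ↦ x^(p-1)`, `(2t)^(p-1) K ≤ A - B`. Comparing `h 0` with `h 1` gives the
inequality for finite sums, and the series case follows by taking limits along finite sets.
-/

open Finset

lemma rpow_two_mul_le_rpow_add_sub_rpow_sub {x y s : ℝ} (hy : 0 ≤ y) (hyx : y ≤ x) (hs : 1 ≤ s) :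
    (2 * y) ^ s ≤ (x + y) ^ s - (x - y) ^ s := by
  have h := Real.add_rpow_le_rpow_add (by linarith : 0 ≤ 2 * y) (sub_nonneg.2 hyx) hs
  rw [show 2 * y + (x - y) = x + y by ring] at h
  linarith

lemma le_rpow_sub_one_mul_sub_rpow_sub_one_mul {p r c K a b A B : ℝ} (hp : 1 ≤ p) (hr : 1 ≤ r)
    (hc : 0 ≤ c) (hK : 0 ≤ K) (ha : c ^ p * K ≤ a) (hAB : c ^ (p - 1) * K ≤ A - B)
    (hb : 0 ≤ b) (hba : b ≤ a) (hB : 0 ≤ B) :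
    c ^ (p * r - 1) * K ^ r ≤ a ^ (r - 1) * A - b ^ (r - 1) * B := by
  have hsplit : c ^ (p * r - 1) * K ^ r = (c ^ p * K) ^ (r - 1) * (c ^ (p - 1) * K) := by
    have hKr : K ^ r = K ^ (r - 1) * K := by
      rw [← Real.rpow_add_one' hK (by linarith), sub_add_cancel]
    rw [Real.mul_rpow (Real.rpow_nonneg hc p) hK, ← Real.rpow_mul hc,
      show p * r - 1 = p * (r - 1) + (p - 1) by ring,
      Real.rpow_add_of_nonneg hc (by nlinarith) (by linarith), hKr]
    ring
  calc c ^ (p * r - 1) * K ^ r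
      = (c ^ p * K) ^ (r - 1) * (c ^ (p - 1) * K) := hsplit
    _ ≤ a ^ (r - 1) * (A - B) := by
      gcongr
      exact Real.rpow_nonneg (hb.trans hba) _
    _ ≤ a ^ (r - 1) * A - b ^ (r - 1) * B := by
      have : b ^ (r - 1) * B ≤ a ^ (r - 1) * B := by gcongr
      linarith

variable {ι : Type*}

lemma hasDerivAt_sum_rpow_add_mul (s : Finset ι) (u v : ι → ℝ) {p : ℝ} (hp : 1 ≤ p) (t : ℝ) :
    HasDerivAt (fun t => ∑ i ∈ s, (u i + t * v i) ^ p)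
      (p * ∑ i ∈ s, (u i + t * v i) ^ (p - 1) * v i) t := by
  rw [mul_sum]
  refine HasDerivAt.fun_sum fun i _ => ?_
  exact (((hasDerivAt_mul_const (v i)).const_add (u i)).rpow_const (Or.inr hp)).congr_deriv
    (by ring)

/-- Up to the factor `p * r`, the right side minus the left side is the derivative in `t` of
`(∑ (u + t v)^p)^r + (∑ (u - t v)^p)^r - 2^(p r - 1) t^(p r) (∑ v^p)^r`. -/
lemma le_sum_rpow_sub_one_mul_sub_sum_rpow_sub_one_mul (s : Finset ι) {p r t : ℝ} (hp : 2 ≤ p)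
    (hr : 1 ≤ r) (ht0 : 0 ≤ t) (ht1 : t ≤ 1) {u v : ι → ℝ} (hv : ∀ i, 0 ≤ v i)
    (hvu : ∀ i, v i ≤ u i) :
    (2 * t) ^ (p * r - 1) * (∑ i ∈ s, v i ^ p) ^ r ≤
      (∑ i ∈ s, (u i + t * v i) ^ p) ^ (r - 1) * ∑ i ∈ s, (u i + t * v i) ^ (p - 1) * v i -
      (∑ i ∈ s, (u i - t * v i) ^ p) ^ (r - 1) * ∑ i ∈ s, (u i - t * v i) ^ (p - 1) * v i := by
  have htv0 i : 0 ≤ t * v i := mul_nonneg ht0 (hv i)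
  have htvu i : t * v i ≤ u i := (mul_le_of_le_one_left (hv i) ht1).trans (hvu i)
  have h2tv i : (2 * t) ^ p * v i ^ p ≤ (u i + t * v i) ^ p := by
    rw [← Real.mul_rpow (by linarith) (hv i)]
    gcongr
    · exact mul_nonneg (by linarith) (hv i)
    · linarith [htvu i]
  refine le_rpow_sub_one_mul_sub_rpow_sub_one_mul (by linarith) hr (by linarith)
    (sum_nonneg fun i _ => Real.rpow_nonneg (hv i) p) ?_ ?_
    (sum_nonneg fun i _ => Real.rpow_nonneg (sub_nonneg.2 (htvu i)) p) ?_
    (sum_nonneg fun i _ => mul_nonneg (Real.rpow_nonneg (sub_nonneg.2 (htvu i)) _) (hv i))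
  · rw [mul_sum]
    exact sum_le_sum fun i _ => h2tv i
  · rw [mul_sum, ← sum_sub_distrib]
    refine sum_le_sum fun i _ => ?_
    calc (2 * t) ^ (p - 1) * v i ^ p = (2 * (t * v i)) ^ (p - 1) * v i := by
          rw [← mul_assoc, Real.mul_rpow (by linarith) (hv i), mul_assoc,
            ← Real.rpow_add_one' (hv i) (by linarith), sub_add_cancel]
      _ ≤ ((u i + t * v i) ^ (p - 1) - (u i - t * v i) ^ (p - 1)) * v i :=
          mul_le_mul_of_nonneg_right
            (rpow_two_mul_le_rpow_add_sub_rpow_sub (htv0 i) (htvu i) (by linarith)) (hv i)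
      _ = _ := by ring
  · exact sum_le_sum fun i _ =>
      Real.rpow_le_rpow (sub_nonneg.2 (htvu i)) (by linarith [htv0 i]) (by linarith)

theorem rpow_sum_add_rpow_sum_sub_ge (s : Finset ι) {p r : ℝ} (hp : 2 ≤ p) (hr : 1 ≤ r)
    {u v : ι → ℝ} (hv : ∀ i, 0 ≤ v i) (hvu : ∀ i, v i ≤ u i) :
    2 * (∑ i ∈ s, u i ^ p) ^ r + 2 ^ (p * r - 1) * (∑ i ∈ s, v i ^ p) ^ r ≤
      (∑ i ∈ s, (u i + v i) ^ p) ^ r + (∑ i ∈ s, (u i - v i) ^ p) ^ r := by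
  set K := ∑ i ∈ s, v i ^ p
  have hp1 : 1 ≤ p := by linarith
  have hpr : 1 ≤ p * r := by nlinarith
  let P t := ∑ i ∈ s, (u i + t * v i) ^ p
  let Q t := ∑ i ∈ s, (u i + t * -v i) ^ p
  let h t := P t ^ r + Q t ^ r - 2 ^ (p * r - 1) * t ^ (p * r) * K ^ r
  have hderiv t : HasDerivAt h
      (p * (∑ i ∈ s, (u i + t * v i) ^ (p - 1) * v i) * r * P t ^ (r - 1)
        + p * (∑ i ∈ s, (u i + t * -v i) ^ (p - 1) * -v i) * r * Q t ^ (r - 1)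
        - 2 ^ (p * r - 1) * (p * r * t ^ (p * r - 1)) * K ^ r) t :=
    (((hasDerivAt_sum_rpow_add_mul s u v hp1 t).rpow_const (Or.inr hr)).add
      ((hasDerivAt_sum_rpow_add_mul s u (-v ·) hp1 t).rpow_const (Or.inr hr))).sub
      (((Real.hasDerivAt_rpow_const (Or.inr hpr)).const_mul _).mul_const _)
  have hmono : MonotoneOn h (Set.Icc 0 1) := by
    refine monotoneOn_of_hasDerivWithinAt_nonneg (convex_Icc 0 1)
      (fun t _ => (hderiv t).continuousAt.continuousWithinAt)
      (fun t _ => (hderiv t).hasDerivWithinAt) fun t ht => ?_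
    rw [interior_Icc] at ht
    have key := le_sum_rpow_sub_one_mul_sub_sum_rpow_sub_one_mul s hp hr ht.1.le ht.2.le hv hvu
    rw [Real.mul_rpow zero_le_two ht.1.le] at key
    simp only [P, Q, mul_neg, ← sub_eq_add_neg, sum_neg_distrib]
    have := mul_nonneg (by positivity : 0 ≤ p * r) (sub_nonneg.2 key)
    linarith
  have h01 := hmono (by simp) (by simp) zero_le_one
  simp only [h, P, Q, zero_mul, add_zero, one_mul, mul_neg, ← sub_eq_add_neg, sub_zero, mul_zero,
    mul_one, Real.one_rpow, Real.zero_rpow (by linarith : p * r ≠ 0)] at h01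
  linarith

theorem rpow_tsum_add_rpow_tsum_sub_ge {p r : ℝ} (hp : 2 ≤ p) (hr : 1 ≤ r) {u v : ι → ℝ}
    (hv : ∀ i, 0 ≤ v i) (hvu : ∀ i, v i ≤ u i) (hu : Summable fun i => u i ^ p) :
    2 * (∑' i, u i ^ p) ^ r + 2 ^ (p * r - 1) * (∑' i, v i ^ p) ^ r ≤
      (∑' i, (u i + v i) ^ p) ^ r + (∑' i, (u i - v i) ^ p) ^ r := by
  have hp0 : 0 ≤ p := by linarith
  have hr0 : 0 ≤ r := by linarith
  have hu0 i : 0 ≤ u i := (hv i).trans (hvu i)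
  have hsv : Summable fun i => v i ^ p :=
    hu.of_nonneg_of_le (fun i => Real.rpow_nonneg (hv i) p)
      fun i => Real.rpow_le_rpow (hv i) (hvu i) hp0
  have hsadd : Summable fun i => (u i + v i) ^ p :=
    (hu.mul_left (2 ^ p)).of_nonneg_of_le (fun i => Real.rpow_nonneg (by linarith [hv i, hu0 i]) p)
      fun i => by
        rw [← Real.mul_rpow zero_le_two (hu0 i)]
        exact Real.rpow_le_rpow (by linarith [hv i, hu0 i]) (by linarith [hvu i]) hp0
  have hssub : Summable fun i => (u i - v i) ^ p :=
    hu.of_nonneg_of_le (fun i => Real.rpow_nonneg (sub_nonneg.2 (hvu i)) p)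
      fun i => Real.rpow_le_rpow (sub_nonneg.2 (hvu i)) (by linarith [hv i]) hp0
  refine le_of_tendsto_of_tendsto'
    (((hu.hasSum.rpow_const (Or.inr hr0)).const_mul 2).add
      ((hsv.hasSum.rpow_const (Or.inr hr0)).const_mul _))
    ((hsadd.hasSum.rpow_const (Or.inr hr0)).add (hssub.hasSum.rpow_const (Or.inr hr0)))
    fun s => rpow_sum_add_rpow_sum_sub_ge s hp hr hv hvu

theorem stmt9 (p q : ℝ) (hp : 2 ≤ p) (hpq : p ≤ q) (u v : ℕ → ℝ)
    (hv0 : ∀ n, 0 ≤ v n) (huv : ∀ n, v n ≤ u n)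
    (hu : Summable fun n => u n ^ p) :
    ((∑' n, |u n + v n| ^ p) ^ (1 / p)) ^ q + ((∑' n, |u n - v n| ^ p) ^ (1 / p)) ^ q ≥
      2 * (((∑' n, |u n| ^ p) ^ (1 / p)) ^ q +
        2 ^ (q - 2) * ((∑' n, |v n| ^ p) ^ (1 / p)) ^ q) := by
  have hp0 : 0 < p := by linarith
  have hu0 n : 0 ≤ u n := (hv0 n).trans (huv n)
  have hnorm (w : ℕ → ℝ) (hw : ∀ n, 0 ≤ w n) :
      ((∑' n, |w n| ^ p) ^ (1 / p)) ^ q = (∑' n, w n ^ p) ^ (q / p) := by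
    simp_rw [abs_of_nonneg (hw _)]
    rw [← Real.rpow_mul (tsum_nonneg fun n => Real.rpow_nonneg (hw n) p), one_div_mul_eq_div]
  have key := rpow_tsum_add_rpow_tsum_sub_ge hp ((one_le_div hp0).2 hpq) hv0 huv hu
  rw [mul_div_cancel₀ q hp0.ne'] at key
  rw [hnorm (fun n => u n + v n) fun n => add_nonneg (hu0 n) (hv0 n),
    hnorm (fun n => u n - v n) fun n => sub_nonneg.2 (huv n), hnorm u hu0, hnorm v hv0]
  have h2 : (2 : ℝ) ^ (q - 1) = 2 * 2 ^ (q - 2) := by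
    rw [show q - 1 = 1 + (q - 2) by ring, Real.rpow_add zero_lt_two, Real.rpow_one]
  rw [h2] at key
  linarith
end

section
/- Let 2 ≤ p ≤ q be real numbers, let u₁,…,uₙ and v₁,…,vₙ be nonnegative reals with uᵢ ≥ vᵢ for all i, and define φ(t) = (∑(uᵢ+tvᵢ)^p)^(q/p) + (∑(uᵢ−tvᵢ)^p)^(q/p) − 2^(q-1)((∑uᵢ^p)^(q/p) + t^q (∑vᵢ^p)^(q/p)) for t ∈ [0,1]. Then φ is monotone nondecreasing on [0,1]. -/
/-!
Write `φ = clarksonGap p q u v`. With `A = ∑ (uᵢ + t vᵢ)^p`, `B = ∑ (uᵢ - t vᵢ)^p`,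
`a = ∑ (uᵢ + t vᵢ)^(p-1) vᵢ`, `b = ∑ (uᵢ - t vᵢ)^(p-1) vᵢ` and `C = ∑ vᵢ^p`, one has
`φ'(t) = q (A^(q/p-1) a - B^(q/p-1) b - (2t)^(q-1) C^(q/p))`.
Since `B ≤ A`, the bracket is at least `A^(q/p-1) (a - b) - (2t)^(q-1) C^(q/p)`.
Superadditivity of `x ↦ x^(p-1)` (here `p ≥ 2` is needed), applied to
`(uᵢ - t vᵢ) + 2t vᵢ`, gives `a - b ≥ (2t)^(p-1) C`, and `2t vᵢ ≤ uᵢ + t vᵢ` gives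
`A ≥ (2t)^p C`; the product of these two bounds is exactly `(2t)^(q-1) C^(q/p)`.
-/

open Finset

namespace Real

lemma rpow_two_mul_le_rpow_add_sub_rpow_sub {x y r : ℝ} (hy : 0 ≤ y) (hyx : y ≤ x)
    (hr : 1 ≤ r) : (2 * y) ^ r ≤ (x + y) ^ r - (x - y) ^ r := by
  have h := add_rpow_le_rpow_add (sub_nonneg.2 hyx) (by positivity : 0 ≤ 2 * y) hr
  rw [show x - y + 2 * y = x + y by ring] at h
  linarith

lemma rpow_mul_le_rpow_mul_sub_rpow_mul {p q s C A B a b : ℝ} (hp : 0 < p) (hpq : p ≤ q)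
    (hs : 0 < s) (hC : 0 ≤ C) (hB : 0 ≤ B) (hBA : B ≤ A) (hb : 0 ≤ b)
    (hA : s ^ p * C ≤ A) (hab : s ^ (p - 1) * C ≤ a - b) :
    s ^ (q - 1) * C ^ (q / p) ≤ A ^ (q / p - 1) * a - B ^ (q / p - 1) * b := by
  have hr : 0 ≤ q / p - 1 := by rw [sub_nonneg, one_le_div hp]; exact hpq
  calc s ^ (q - 1) * C ^ (q / p)
      = (s ^ p * C) ^ (q / p - 1) * (s ^ (p - 1) * C) := by
        rw [mul_rpow (by positivity) hC, ← rpow_mul hs.le, mul_sub, mul_div_cancel₀ _ hp.ne',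
          mul_one, mul_mul_mul_comm, ← rpow_add hs, ← rpow_add_one' hC (by linarith),
          sub_add_cancel, sub_add_sub_cancel]
    _ ≤ A ^ (q / p - 1) * (a - b) := by
        have : 0 ≤ A := hB.trans hBA
        gcongr
    _ ≤ A ^ (q / p - 1) * a - B ^ (q / p - 1) * b := by
        rw [mul_sub]
        gcongr

end Real

section SumRpow

variable {ι : Type*} {s : Finset ι} {u v : ι → ℝ} {p t : ℝ}

lemma rpow_two_mul_mul_sum_le_sum_sub_sum (hp : 2 ≤ p) (ht : 0 ≤ t) (hv : ∀ i ∈ s, 0 ≤ v i)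
    (htv : ∀ i ∈ s, t * v i ≤ u i) :
    (2 * t) ^ (p - 1) * ∑ i ∈ s, v i ^ p ≤
      ∑ i ∈ s, (u i + t * v i) ^ (p - 1) * v i - ∑ i ∈ s, (u i - t * v i) ^ (p - 1) * v i := by
  rw [mul_sum, ← sum_sub_distrib]
  refine sum_le_sum fun i hi => ?_
  calc (2 * t) ^ (p - 1) * v i ^ p = (2 * (t * v i)) ^ (p - 1) * v i := by
        rw [← mul_assoc, Real.mul_rpow (by positivity) (hv i hi), mul_assoc,
          ← Real.rpow_add_one' (hv i hi) (by linarith), sub_add_cancel]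
    _ ≤ ((u i + t * v i) ^ (p - 1) - (u i - t * v i) ^ (p - 1)) * v i :=
        mul_le_mul_of_nonneg_right (Real.rpow_two_mul_le_rpow_add_sub_rpow_sub
          (mul_nonneg ht (hv i hi)) (htv i hi) (by linarith)) (hv i hi)
    _ = _ := sub_mul _ _ _

lemma rpow_two_mul_mul_sum_le_sum_rpow_add (hp : 0 ≤ p) (ht : 0 ≤ t) (hv : ∀ i ∈ s, 0 ≤ v i)
    (htv : ∀ i ∈ s, t * v i ≤ u i) :
    (2 * t) ^ p * ∑ i ∈ s, v i ^ p ≤ ∑ i ∈ s, (u i + t * v i) ^ p := by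
  rw [mul_sum]
  refine sum_le_sum fun i hi => ?_
  rw [← Real.mul_rpow (by positivity) (hv i hi)]
  have := htv i hi
  exact Real.rpow_le_rpow (mul_nonneg (by positivity) (hv i hi)) (by linarith) hp

end SumRpow

lemma HasDerivAt.sum_rpow_rpow {ι : Type*} {s : Finset ι} {f : ι → ℝ → ℝ} {f' : ι → ℝ}
    {t p r : ℝ} (hf : ∀ i ∈ s, HasDerivAt (f i) (f' i) t) (hp : 1 ≤ p) (hr : 1 ≤ r) :
    HasDerivAt (fun x => (∑ i ∈ s, f i x ^ p) ^ r)
      (r * (∑ i ∈ s, f i t ^ p) ^ (r - 1) * (p * ∑ i ∈ s, f i t ^ (p - 1) * f' i)) t := by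
  have hsum := HasDerivAt.fun_sum fun i hi =>
    (Real.hasDerivAt_rpow_const (x := f i t) (Or.inr hp)).comp t (hf i hi)
  refine ((Real.hasDerivAt_rpow_const (Or.inr hr)).comp t hsum).congr_deriv ?_
  simp only [Function.comp_apply, mul_sum, mul_assoc]

section ClarksonGap

variable {ι : Type*} [Fintype ι]

noncomputable def clarksonGap (p q : ℝ) (u v : ι → ℝ) (t : ℝ) : ℝ :=
  (∑ i, (u i + t * v i) ^ p) ^ (q / p) + (∑ i, (u i - t * v i) ^ p) ^ (q / p) -
    2 ^ (q - 1) * ((∑ i, u i ^ p) ^ (q / p) + t ^ q * (∑ i, v i ^ p) ^ (q / p))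

lemma hasDerivAt_clarksonGap (u v : ι → ℝ) {p q : ℝ} (hp : 1 ≤ p) (hpq : p ≤ q) (t : ℝ) :
    HasDerivAt (clarksonGap p q u v)
      (q * ((∑ i, (u i + t * v i) ^ p) ^ (q / p - 1) * ∑ i, (u i + t * v i) ^ (p - 1) * v i -
        (∑ i, (u i - t * v i) ^ p) ^ (q / p - 1) * ∑ i, (u i - t * v i) ^ (p - 1) * v i -
        2 ^ (q - 1) * t ^ (q - 1) * (∑ i, v i ^ p) ^ (q / p))) t := by
  have hr : 1 ≤ q / p := (one_le_div (by linarith)).2 hpq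
  have hplus := HasDerivAt.sum_rpow_rpow (s := univ) (t := t) (f := fun i x => u i + x * v i)
    (fun i _ => (hasDerivAt_mul_const (v i)).const_add (u i)) hp hr
  have hminus := HasDerivAt.sum_rpow_rpow (s := univ) (t := t) (f := fun i x => u i - x * v i)
    (fun i _ => (hasDerivAt_mul_const (v i)).const_sub (u i)) hp hr
  have hpow := (((Real.hasDerivAt_rpow_const (x := t) (Or.inr (hp.trans hpq))).mul_const
    ((∑ i, v i ^ p) ^ (q / p))).const_add ((∑ i, u i ^ p) ^ (q / p))).const_mul (2 ^ (q - 1))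
  refine ((hplus.add hminus).sub hpow).congr_deriv ?_
  simp only [mul_neg, sum_neg_distrib]
  field_simp
  ring

end ClarksonGap

theorem stmt10_general (n : ℕ) (p q : ℝ) (hp : 2 ≤ p) (hpq : p ≤ q)
    (u v : Fin n → ℝ) (hv : ∀ i, 0 ≤ v i) (huv : ∀ i, v i ≤ u i) :
    MonotoneOn (fun t : ℝ =>
      (∑ i, (u i + t * v i) ^ p) ^ (q / p) + (∑ i, (u i - t * v i) ^ p) ^ (q / p) -
        2 ^ (q - 1) * ((∑ i, u i ^ p) ^ (q / p) + t ^ q * (∑ i, v i ^ p) ^ (q / p)))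
      (Set.Icc 0 1) := by
  have hp1 : 1 ≤ p := by linarith
  have hderiv := hasDerivAt_clarksonGap u v hp1 hpq
  refine monotoneOn_of_hasDerivWithinAt_nonneg (f := clarksonGap p q u v) (convex_Icc 0 1)
    (fun t _ => (hderiv t).continuousAt.continuousWithinAt)
    (fun t _ => (hderiv t).hasDerivWithinAt) ?_
  rw [interior_Icc]
  rintro t ⟨ht0, ht1⟩
  have htv : ∀ i ∈ univ, t * v i ≤ u i := fun i _ =>
    (mul_le_of_le_one_left (hv i) ht1.le).trans (huv i)
  have hminus : ∀ i ∈ univ, 0 ≤ u i - t * v i := fun i hi => sub_nonneg.2 (htv i hi)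
  refine mul_nonneg (by linarith) (sub_nonneg.2 ?_)
  rw [← Real.mul_rpow zero_le_two ht0.le]
  refine Real.rpow_mul_le_rpow_mul_sub_rpow_mul (by linarith) hpq (by positivity)
    (sum_nonneg fun i _ => Real.rpow_nonneg (hv i) _)
    (sum_nonneg fun i hi => Real.rpow_nonneg (hminus i hi) _)
    (sum_le_sum fun i hi => Real.rpow_le_rpow (hminus i hi) ?_ (by linarith))
    (sum_nonneg fun i hi => mul_nonneg (Real.rpow_nonneg (hminus i hi) _) (hv i))
    (rpow_two_mul_mul_sum_le_sum_rpow_add (by linarith) ht0.le (fun i _ => hv i) htv)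
    (rpow_two_mul_mul_sum_le_sum_sub_sum hp ht0.le (fun i _ => hv i) htv)
  linarith [mul_nonneg ht0.le (hv i)]

theorem stmt10 (n : ℕ) (hn : 0 < n) (p q : ℝ) (hp : 2 ≤ p) (hpq : p ≤ q)
    (u v : Fin n → ℝ) (hv : ∀ i, 0 ≤ v i) (huv : ∀ i, v i ≤ u i) :
    MonotoneOn (fun t : ℝ =>
      (∑ i, (u i + t * v i) ^ p) ^ (q / p) + (∑ i, (u i - t * v i) ^ p) ^ (q / p) -
        2 ^ (q - 1) * ((∑ i, u i ^ p) ^ (q / p) + t ^ q * (∑ i, v i ^ p) ^ (q / p)))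
      (Set.Icc 0 1) :=
  stmt10_general n p q hp hpq u v hv huv
end

section
/- Let p ≥ 2 and q = p/(p-1). For all real numbers x, y one has |x+y|^q + |x−y|^q ≥ 2(|x|^p + |y|^p)^(q-1) (scalar Clarkson inequality (1.1)). -/
/-!
Clarkson's series argument. By symmetry and homogeneity it suffices to show
`2 (1 + t ^ p) ^ (q - 1) ≤ (1 + t) ^ q + (1 - t) ^ q` for `0 ≤ t < 1`. By the binomial series the
right side is `2 ∑ C(q, 2k) t ^ (2k)` and `(1 + t ^ p) ^ (q - 1) = ∑ C(q - 1, n) t ^ (p n)`.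
Each pair of terms `n = 2k + 1, 2k + 2` of the latter is at most `C(q, 2k + 2) t ^ (2k + 2)`:
after the factor `C(q - 1, 2k + 1) ≥ 0` is pulled out, this is the weighted AM–GM inequality for
`t ^ (2k + 2)` and `t ^ (p (2k + 2))` with weights `q / (2k + 2)` and `1 - q / (2k + 2)`, the
exponents matching because `p q = p + q`.
-/

open Real

namespace Ring

section BinomialRing

variable {R : Type*} [NonAssocRing R] [Pow R ℕ] [BinomialRing R] [NatPowAssoc R]

theorem choose_succ_right_eq (r : R) (k : ℕ) :
    (k + 1) • choose r (k + 1) = choose r k * (r - k) := by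
  simpa using choose_smul_choose r (Nat.le_succ k)

theorem succ_nsmul_choose_succ (r : R) (k : ℕ) :
    (k + 1) • choose r (k + 1) = r * choose (r - 1) k := by
  simpa using choose_smul_choose r (Nat.le_add_left 1 k)

end BinomialRing

theorem choose_odd_nonneg {K : Type*} [Field K] [LinearOrder K] [IsStrictOrderedRing K]
    [BinomialRing K] {a : K} (ha₀ : 0 ≤ a) (ha₁ : a ≤ 1) (k : ℕ) :
    0 ≤ choose a (2 * k + 1) := by
  induction k with
  | zero => simpa using ha₀
  | succ k ih =>
    have h₁ := choose_succ_right_eq a (2 * k + 1)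
    have h₂ := choose_succ_right_eq a (2 * k + 2)
    simp only [nsmul_eq_mul] at h₁ h₂
    push_cast at h₁ h₂
    have hk : (0 : K) ≤ k := k.cast_nonneg
    have key : ((2 * k + 2) * (2 * k + 3) : K) * choose a (2 * (k + 1) + 1) =
        choose a (2 * k + 1) * ((2 * k + 1 - a) * (2 * k + 2 - a)) := by
      linear_combination (2 * (k : K) + 2) * h₂ + (a - (2 * k + 2)) * h₁
    have hpos : (0 : K) < (2 * k + 2) * (2 * k + 3) := by positivity
    refine (mul_nonneg_iff_of_pos_left hpos).1 ?_
    rw [key]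
    exact mul_nonneg ih (mul_nonneg (by linarith) (by linarith))

end Ring

theorem HasSum.pairs {α : Type*} [AddCommGroup α] [UniformSpace α] [IsUniformAddGroup α]
    [CompleteSpace α] [T2Space α] {f : ℕ → α} {a : α} (hf : HasSum f a) :
    HasSum (fun k ↦ f (2 * k) + f (2 * k + 1)) a := by
  have he := (hf.summable.comp_injective (mul_right_injective₀ two_ne_zero)).hasSum
  have ho := (hf.summable.comp_injective
    ((add_left_injective 1).comp (mul_right_injective₀ two_ne_zero))).hasSum
  rw [hf.unique (he.even_add_odd ho)]
  exact he.add ho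

theorem hasSum_one_add_rpow (a : ℝ) {x : ℝ} (hx : |x| < 1) :
    HasSum (fun n ↦ Ring.choose a n * x ^ n) ((1 + x) ^ a) := by
  have := (one_add_rpow_hasFPowerSeriesOnBall_zero (a := a)).hasSum (y := x)
    (by simpa [Metric.mem_eball, enorm_eq_ofReal_abs, ENNReal.ofReal_lt_one] using hx)
  simpa [binomialSeries, FormalMultilinearSeries.ofScalars_apply_eq, mul_comm] using this

theorem hasSum_choose_two_mul_mul_pow (a : ℝ) {t : ℝ} (ht : |t| < 1) :
    HasSum (fun k ↦ Ring.choose a (2 * k) * t ^ (2 * k)) (((1 + t) ^ a + (1 - t) ^ a) / 2) := by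
  have h := ((hasSum_one_add_rpow a ht).add
    (hasSum_one_add_rpow a (x := -t) (by rwa [abs_neg]))).div_const 2
  rw [← sub_eq_add_neg, ← (mul_right_injective₀ two_ne_zero).hasSum_iff] at h
  · simpa [Function.comp_def, pow_mul] using h
  · rintro n hn
    obtain ⟨k, rfl⟩ : Odd n := by
      simpa [Nat.not_even_iff_odd, even_iff_two_dvd, Nat.odd_iff] using hn
    simp [pow_succ, pow_mul]

namespace Real.HolderConjugate

theorem succ_mul_rpow_pow_le {p q t : ℝ} (hpq : p.HolderConjugate q) (ht : 0 ≤ t) {m : ℕ}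
    (hm : q ≤ m + 1) :
    (m + 1) * (t ^ p) ^ m ≤ q * t ^ (m + 1) + (m + 1 - q) * (t ^ p) ^ (m + 1) := by
  have hm₀ : (0 : ℝ) < m + 1 := by positivity
  have hq := hpq.symm.pos
  have amgm := geom_mean_le_arith_mean2_weighted (w₁ := q / (m + 1)) (w₂ := (m + 1 - q) / (m + 1))
    (p₁ := t ^ (m + 1)) (p₂ := (t ^ p) ^ (m + 1)) (by positivity) (div_nonneg (by linarith) hm₀.le)
    (by positivity) (by positivity) (by field_simp; ring)
  have hexp : (m + 1 : ℝ) * (q / (m + 1)) + p * (m + 1) * ((m + 1 - q) / (m + 1)) = p * m := by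
    field_simp
    linear_combination -hpq.mul_eq_add
  have hm : (0 : ℝ) < m := by linarith [hpq.symm.lt]
  have hgeom : (t ^ (m + 1)) ^ (q / (m + 1)) * ((t ^ p) ^ (m + 1)) ^ ((m + 1 - q) / (m + 1))
      = (t ^ p) ^ m := by
    rw [← rpow_natCast, ← rpow_natCast, ← rpow_natCast, ← rpow_mul ht, ← rpow_mul ht,
      ← rpow_mul ht, ← rpow_mul ht, ← rpow_add' ht] <;> push_cast <;> rw [hexp]
    exact (mul_pos hpq.pos hm).ne'
  rw [hgeom] at amgm
  calc (m + 1) * (t ^ p) ^ m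
      ≤ (m + 1) * (q / (m + 1) * t ^ (m + 1) + (m + 1 - q) / (m + 1) * (t ^ p) ^ (m + 1)) := by
        gcongr
    _ = _ := by field_simp

theorem choose_sub_one_pair_le {p q t : ℝ} (hpq : p.HolderConjugate q) (hq : q ≤ 2) (ht : 0 ≤ t)
    (k : ℕ) :
    Ring.choose (q - 1) (2 * k + 1) * (t ^ p) ^ (2 * k + 1)
      + Ring.choose (q - 1) (2 * k + 2) * (t ^ p) ^ (2 * k + 2)
      ≤ Ring.choose q (2 * k + 2) * t ^ (2 * k + 2) := by
  have h₁ := Ring.choose_succ_right_eq (q - 1) (2 * k + 1)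
  have h₂ := Ring.succ_nsmul_choose_succ q (2 * k + 1)
  have amgm := hpq.succ_mul_rpow_pow_le ht (m := 2 * k + 1)
    (by push_cast; linarith [k.cast_nonneg (α := ℝ)])
  simp only [nsmul_eq_mul] at h₁ h₂
  push_cast at h₁ h₂ amgm
  have hc := Ring.choose_odd_nonneg (sub_nonneg.2 hpq.symm.lt.le) (by linarith) k
  have hk : (0 : ℝ) < 2 * k + 2 := by positivity
  refine le_of_mul_le_mul_left (sub_nonneg.1 ?_) hk
  convert mul_nonneg hc (sub_nonneg.2 amgm) using 1
  linear_combination t ^ (2 * k + 2) * h₂ - (t ^ p) ^ (2 * k + 2) * h₁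

theorem one_add_rpow_sub_one_le {p q t : ℝ} (hpq : p.HolderConjugate q) (hq : q ≤ 2)
    (ht₀ : 0 ≤ t) (ht₁ : t < 1) :
    (1 + t ^ p) ^ (q - 1) ≤ ((1 + t) ^ q + (1 - t) ^ q) / 2 := by
  have hs : |t ^ p| < 1 := by
    rw [abs_of_nonneg (by positivity)]
    exact rpow_lt_one ht₀ ht₁ hpq.pos
  have hR := ((hasSum_nat_add_iff' 1).2 (hasSum_one_add_rpow (q - 1) hs)).pairs
  have hL := (hasSum_nat_add_iff' 1).2
    (hasSum_choose_two_mul_mul_pow q (abs_lt.2 ⟨by linarith, ht₁⟩))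
  simp only [Finset.range_one, Finset.sum_singleton, Ring.choose_zero_right', pow_zero, mul_one,
    mul_zero, sub_add_cancel] at hR hL
  linarith [hasSum_le (fun k ↦ hpq.choose_sub_one_pair_le hq ht₀ k) hR hL]

theorem two_mul_one_add_rpow_le {p q t : ℝ} (hpq : p.HolderConjugate q) (hq : q ≤ 2)
    (ht₀ : 0 ≤ t) (ht₁ : t ≤ 1) :
    2 * (1 + t ^ p) ^ (q - 1) ≤ (1 + t) ^ q + (1 - t) ^ q := by
  rcases ht₁.lt_or_eq with ht₁ | rfl
  · linarith [hpq.one_add_rpow_sub_one_le hq ht₀ ht₁]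
  · rw [one_rpow, sub_self, zero_rpow hpq.symm.ne_zero, one_add_one_eq_two,
      rpow_sub_one two_ne_zero]
    linarith

theorem two_mul_add_rpow_le {p q a b : ℝ} (hpq : p.HolderConjugate q) (hq : q ≤ 2)
    (hb : 0 ≤ b) (hba : b ≤ a) :
    2 * (a ^ p + b ^ p) ^ (q - 1) ≤ (a + b) ^ q + (a - b) ^ q := by
  rcases (hb.trans hba).eq_or_lt with rfl | ha
  · obtain rfl : b = 0 := le_antisymm hba hb
    simp [zero_rpow hpq.ne_zero, zero_rpow hpq.symm.ne_zero, zero_rpow hpq.symm.sub_one_ne_zero]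
  have hexp : p * (q - 1) = q := by linear_combination hpq.mul_eq_add
  have key := hpq.two_mul_one_add_rpow_le hq (div_nonneg hb ha.le) ((div_le_one ha).2 hba)
  calc 2 * (a ^ p + b ^ p) ^ (q - 1) = a ^ q * (2 * (1 + (b / a) ^ p) ^ (q - 1)) := by
        rw [div_rpow hb ha.le, one_add_div (rpow_pos_of_pos ha p).ne',
          div_rpow (by positivity) (by positivity), ← rpow_mul ha.le, hexp]
        field_simp
    _ ≤ a ^ q * ((1 + b / a) ^ q + (1 - b / a) ^ q) := by gcongr
    _ = (a + b) ^ q + (a - b) ^ q := by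
        rw [one_add_div ha.ne', one_sub_div ha.ne', div_rpow (by positivity) ha.le,
          div_rpow (by linarith) ha.le]
        field_simp

end Real.HolderConjugate

theorem abs_add_rpow_add_abs_sub_rpow (x y r : ℝ) :
    |x + y| ^ r + |x - y| ^ r = (|x| + |y|) ^ r + |(|x| - |y|)| ^ r := by
  rw [← abs_of_nonneg (add_nonneg (abs_nonneg x) (abs_nonneg y))]
  rcases abs_choice x with hx | hx <;> rcases abs_choice y with hy | hy <;> rw [hx, hy]
  · rw [← sub_eq_add_neg, sub_neg_eq_add, add_comm]
  · rw [show -x + y = -(x - y) by ring, show -x - y = -(x + y) by ring, abs_neg, abs_neg, add_comm]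
  · rw [show -x + -y = -(x + y) by ring, show -x - -y = -(x - y) by ring, abs_neg, abs_neg]

theorem stmt14 (p q : ℝ) (hp : 2 ≤ p) (hq : q = p / (p - 1)) (x y : ℝ) :
    |x + y| ^ q + |x - y| ^ q ≥ 2 * (|x| ^ p + |y| ^ p) ^ (q - 1) := by
  have hpq : p.HolderConjugate q := (holderConjugate_iff_eq_conjExponent (by linarith)).2 hq
  have hq₂ : q ≤ 2 := by rw [hq, div_le_iff₀ (by linarith)]; linarith
  rw [ge_iff_le, abs_add_rpow_add_abs_sub_rpow]
  rcases le_total |y| |x| with h | h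
  · rw [abs_of_nonneg (sub_nonneg.2 h)]
    exact hpq.two_mul_add_rpow_le hq₂ (abs_nonneg y) h
  · rw [abs_sub_comm, abs_of_nonneg (sub_nonneg.2 h), add_comm |x|, add_comm (|x| ^ p)]
    exact hpq.two_mul_add_rpow_le hq₂ (abs_nonneg x) h
end

section
/- Let 2 ≤ p ≤ q, let u ≥ v ≥ 0 be real numbers, and fix t ∈ (0,1). Then for any positive integer n and nonnegative n-tuples u, v with uᵢ ≥ vᵢ: ((∑(uᵢ+tvᵢ)^p)^(q/p−1))·(∑vᵢ(uᵢ+tvᵢ)^(p−1)) ≥ ((∑(uᵢ−tvᵢ)^p)^(q/p−1))·(∑vᵢ(uᵢ−tvᵢ)^(p−1)) + 2^(q−1) t^(q−1) (∑vᵢ^p)^(q/p). -/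
/-!
Write `A± = ∑ (uᵢ ± t vᵢ)^p`, `S± = ∑ vᵢ (uᵢ ± t vᵢ)^(p-1)` and `V = ∑ vᵢ^p`. Since
`0 ≤ uᵢ - t vᵢ` and `2 t vᵢ ≤ uᵢ + t vᵢ`, we get `A- ≤ A+` and `(2t)^p V ≤ A+`, while
superadditivity of `x ↦ x^(p-1)` (as `p - 1 ≥ 1`) applied to
`uᵢ + t vᵢ = (uᵢ - t vᵢ) + 2 t vᵢ` gives `S- + (2t)^(p-1) V ≤ S+`. As `x ↦ x^(q/p-1)` is
monotone, `A-^(q/p-1) S- + ((2t)^p V)^(q/p-1) (2t)^(p-1) V ≤ A+^(q/p-1) S+`, and the second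
term on the left is `(2t)^(q-1) V^(q/p)`.
-/

open Finset

namespace Real

lemma rpow_mul_add_rpow_mul_le {A B L S S' M r : ℝ} (hB : 0 ≤ B) (hBA : B ≤ A) (hL : 0 ≤ L)
    (hLA : L ≤ A) (hS : 0 ≤ S) (hM : 0 ≤ M) (hSM : S + M ≤ S') (hr : 0 ≤ r) :
    B ^ r * S + L ^ r * M ≤ A ^ r * S' :=
  calc B ^ r * S + L ^ r * M ≤ A ^ r * S + A ^ r * M :=
        add_le_add (mul_le_mul_of_nonneg_right (rpow_le_rpow hB hBA hr) hS)
          (mul_le_mul_of_nonneg_right (rpow_le_rpow hL hLA hr) hM)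
    _ = A ^ r * (S + M) := by ring
    _ ≤ A ^ r * S' := mul_le_mul_of_nonneg_left hSM (rpow_nonneg (hL.trans hLA) r)

lemma rpow_rpow_mul_mul_rpow_sub_one_mul {c V p q : ℝ} (hc : 0 < c) (hV : 0 ≤ V) (hp : p ≠ 0)
    (hq : q ≠ 0) :
    (c ^ p * V) ^ (q / p - 1) * (c ^ (p - 1) * V) = c ^ (q - 1) * V ^ (q / p) := by
  have hqp : q / p - 1 + 1 ≠ 0 := by simpa using div_ne_zero hq hp
  rw [mul_rpow (rpow_nonneg hc.le p) hV, ← rpow_mul hc.le]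
  calc c ^ (p * (q / p - 1)) * V ^ (q / p - 1) * (c ^ (p - 1) * V)
      = c ^ (p * (q / p - 1) + (p - 1)) * V ^ (q / p - 1 + 1) := by
        rw [rpow_add hc, rpow_add_one' hV hqp]; ring
    _ = c ^ (q - 1) * V ^ (q / p) := by
        congr 2
        · field_simp; ring
        · ring

end Real

section ShiftedSums

variable {ι : Type*} (s : Finset ι) {u v : ι → ℝ} {t p : ℝ}

lemma sum_rpow_sub_le_sum_rpow_add (ht : 0 ≤ t) (hv : ∀ i ∈ s, 0 ≤ v i)
    (htv : ∀ i ∈ s, t * v i ≤ u i) (hp : 0 ≤ p) :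
    ∑ i ∈ s, (u i - t * v i) ^ p ≤ ∑ i ∈ s, (u i + t * v i) ^ p :=
  sum_le_sum fun i hi => Real.rpow_le_rpow (sub_nonneg.2 (htv i hi))
    (by nlinarith [mul_nonneg ht (hv i hi)]) hp

lemma two_mul_rpow_mul_sum_rpow_le (ht : 0 ≤ t) (hv : ∀ i ∈ s, 0 ≤ v i)
    (htv : ∀ i ∈ s, t * v i ≤ u i) (hp : 0 ≤ p) :
    (2 * t) ^ p * ∑ i ∈ s, v i ^ p ≤ ∑ i ∈ s, (u i + t * v i) ^ p := by
  rw [mul_sum]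
  refine sum_le_sum fun i hi => ?_
  rw [← Real.mul_rpow (by positivity) (hv i hi)]
  exact Real.rpow_le_rpow (mul_nonneg (by positivity) (hv i hi)) (by linarith [htv i hi]) hp

lemma sum_mul_rpow_sub_add_le_sum_mul_rpow_add (ht : 0 ≤ t) (hv : ∀ i ∈ s, 0 ≤ v i)
    (htv : ∀ i ∈ s, t * v i ≤ u i) (hp : 2 ≤ p) :
    ∑ i ∈ s, v i * (u i - t * v i) ^ (p - 1) + (2 * t) ^ (p - 1) * ∑ i ∈ s, v i ^ p ≤
      ∑ i ∈ s, v i * (u i + t * v i) ^ (p - 1) := by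
  rw [mul_sum, ← sum_add_distrib]
  refine sum_le_sum fun i hi => ?_
  have hvi := hv i hi
  have hsuper : (u i - t * v i) ^ (p - 1) + (2 * t * v i) ^ (p - 1) ≤ (u i + t * v i) ^ (p - 1) := by
    have h := Real.add_rpow_le_rpow_add (sub_nonneg.2 (htv i hi))
      (by positivity : 0 ≤ 2 * t * v i) (by linarith : 1 ≤ p - 1)
    rwa [show u i - t * v i + 2 * t * v i = u i + t * v i by ring] at h
  have hpow : (2 * t) ^ (p - 1) * v i ^ p = v i * (2 * t * v i) ^ (p - 1) := by
    rw [Real.mul_rpow (by positivity) hvi, ← sub_add_cancel p 1,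
      Real.rpow_add_one' hvi (by linarith), add_sub_cancel_right]
    ring
  rw [hpow, ← mul_add]
  exact mul_le_mul_of_nonneg_left hsuper hvi

end ShiftedSums

theorem stmt18_general (n : ℕ) (p q t : ℝ) (hp : 2 ≤ p) (hpq : p ≤ q)
    (ht0 : 0 < t) (ht1 : t < 1) (u v : Fin n → ℝ)
    (hv : ∀ i, 0 ≤ v i) (huv : ∀ i, v i ≤ u i) :
    (∑ i, (u i + t * v i) ^ p) ^ (q / p - 1) * (∑ i, v i * (u i + t * v i) ^ (p - 1)) ≥
      (∑ i, (u i - t * v i) ^ p) ^ (q / p - 1) * (∑ i, v i * (u i - t * v i) ^ (p - 1)) +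
        2 ^ (q - 1) * t ^ (q - 1) * (∑ i, v i ^ p) ^ (q / p) := by
  have hp0 : 0 < p := by linarith
  have hv' : ∀ i ∈ univ, 0 ≤ v i := fun i _ => hv i
  have htv : ∀ i ∈ univ, t * v i ≤ u i := fun i _ =>
    (mul_le_of_le_one_left (hv i) ht1.le).trans (huv i)
  have hsub : ∀ i, 0 ≤ u i - t * v i := fun i => sub_nonneg.2 (htv i (mem_univ i))
  have hV : 0 ≤ ∑ i, v i ^ p := sum_nonneg fun i _ => Real.rpow_nonneg (hv i) p
  have key := Real.rpow_mul_add_rpow_mul_le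
    (sum_nonneg fun i _ => Real.rpow_nonneg (hsub i) p)
    (sum_rpow_sub_le_sum_rpow_add univ ht0.le hv' htv hp0.le)
    (by positivity) (two_mul_rpow_mul_sum_rpow_le univ ht0.le hv' htv hp0.le)
    (sum_nonneg fun i _ => mul_nonneg (hv i) (Real.rpow_nonneg (hsub i) _))
    (by positivity) (sum_mul_rpow_sub_add_le_sum_mul_rpow_add univ ht0.le hv' htv hp)
    (sub_nonneg.2 ((one_le_div hp0).2 hpq))
  rwa [Real.rpow_rpow_mul_mul_rpow_sub_one_mul (by positivity) hV hp0.ne' (by linarith),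
    Real.mul_rpow zero_le_two ht0.le] at key

theorem stmt18 (n : ℕ) (hn : 0 < n) (p q t : ℝ) (hp : 2 ≤ p) (hpq : p ≤ q)
    (ht0 : 0 < t) (ht1 : t < 1) (u v : Fin n → ℝ)
    (hv : ∀ i, 0 ≤ v i) (huv : ∀ i, v i ≤ u i) :
    (∑ i, (u i + t * v i) ^ p) ^ (q / p - 1) * (∑ i, v i * (u i + t * v i) ^ (p - 1)) ≥
      (∑ i, (u i - t * v i) ^ p) ^ (q / p - 1) * (∑ i, v i * (u i - t * v i) ^ (p - 1)) +
        2 ^ (q - 1) * t ^ (q - 1) * (∑ i, v i ^ p) ^ (q / p) :=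
  stmt18_general n p q t hp hpq ht0 ht1 u v hv huv
end
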